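/- arXiv:cs/0206012 — 7 statements merged into one kernel-verified Lean document; each statement's English description precedes it below -/
import Mathlib

section
/- Let A_1, …, A_n be independent events in a probability space, and suppose that the probability x that none of the A_i occurs is nonzero. Then the probability that exactly one of the A_i occurs is at least −x·ln x. -/
open MeasureTheory ProbabilityTheory Finset Function

/-! With `c i = P(A iᶜ)`, independence gives `x = ∏ c i` and
`P(exactly one) = ∑ (1 - c i) ∏_{j ≠ i} c j = x ∑ (1 - c i) / c i`,
while `-log x = ∑ -log (c i)`. The theorem is then the termwise bound
`-log c ≤ 1/c - 1`, i.e. `log t ≤ t - 1` at `t = 1/c`. -/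

theorem Real.neg_log_le_one_sub_div {c : ℝ} (hc : 0 < c) : -Real.log c ≤ (1 - c) / c := by
  have := Real.one_sub_inv_le_log_of_pos hc
  rw [sub_div, div_self hc.ne', one_div]
  linarith

theorem neg_prod_mul_log_prod_le {ι : Type*} [DecidableEq ι] (s : Finset ι) {c : ι → ℝ}
    (hc : ∀ i ∈ s, 0 < c i) :
    -(∏ i ∈ s, c i) * Real.log (∏ i ∈ s, c i) ≤
      ∑ i ∈ s, (1 - c i) * ∏ j ∈ s.erase i, c j := by
  have hprod_erase : ∀ i ∈ s, ∏ j ∈ s.erase i, c j = (∏ j ∈ s, c j) / c i := fun i hi ↦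
    (eq_div_iff (hc i hi).ne').2 (prod_erase_mul s c hi)
  calc -(∏ i ∈ s, c i) * Real.log (∏ i ∈ s, c i)
      = (∏ i ∈ s, c i) * ∑ i ∈ s, -Real.log (c i) := by
        rw [Real.log_prod fun i hi ↦ (hc i hi).ne', sum_neg_distrib]; ring
    _ ≤ (∏ i ∈ s, c i) * ∑ i ∈ s, (1 - c i) / c i := by
        gcongr with i hi
        · exact (prod_pos hc).le
        · exact Real.neg_log_le_one_sub_div (hc i hi)
    _ = ∑ i ∈ s, (1 - c i) * ∏ j ∈ s.erase i, c j := by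
        rw [mul_sum]
        refine sum_congr rfl fun i hi ↦ ?_
        rw [hprod_erase i hi]; ring

theorem Set.setOf_existsUnique_mem_eq_iUnion {α ι : Type*} [DecidableEq ι] (A : ι → Set α) :
    {ω | ∃! i, ω ∈ A i} = ⋃ i, ⋂ j, if j = i then A j else (A j)ᶜ := by
  ext ω
  simp only [Set.mem_ofPred_eq, Set.mem_iUnion, Set.mem_iInter]
  constructor
  · rintro ⟨i, hi, huniq⟩
    refine ⟨i, fun j ↦ ?_⟩
    split_ifs with hji
    · exact hji ▸ hi
    · exact fun hj ↦ hji (huniq j hj)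
  · rintro ⟨i, hω⟩
    refine ⟨i, by simpa using hω i, fun j hj ↦ ?_⟩
    by_contra hji
    exact absurd hj (by simpa [hji] using hω j)

theorem Set.pairwise_disjoint_iInter_ite {α ι : Type*} [DecidableEq ι] (A : ι → Set α) :
    Pairwise (Disjoint on fun i ↦ ⋂ j, if j = i then A j else (A j)ᶜ) := by
  intro i k hik
  rw [Function.onFun, Set.disjoint_left]
  intro ω hωi hωk
  have hi := Set.mem_iInter.1 hωi i
  have hk := Set.mem_iInter.1 hωk i
  simp only at hi
  simp only [if_neg hik] at hk
  exact hk hi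

section Independence

variable {Ω ι : Type*} [MeasurableSpace Ω] {μ : Measure Ω} [Fintype ι]

theorem ProbabilityTheory.iIndepSet.measureReal_iInter_of_forall_eq_or_eq_compl
    {A B : ι → Set Ω} (h : iIndepSet A μ) (hB : ∀ i, B i = A i ∨ B i = (A i)ᶜ) :
    μ.real (⋂ i, B i) = ∏ i, μ.real (B i) := by
  rw [measureReal_def, ((iIndepSet_iff_iIndep A μ).1 h).meas_iInter, ENNReal.toReal_prod]
  · rfl
  intro i
  have hA : MeasurableSet[MeasurableSpace.generateFrom {A i}] (A i) :=
    MeasurableSpace.measurableSet_generateFrom rfl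
  rcases hB i with hBi | hBi <;> rw [hBi]
  exacts [hA, hA.compl]

theorem ProbabilityTheory.iIndepSet.measureReal_setOf_existsUnique_mem [DecidableEq ι]
    {A : ι → Set Ω} (hA : ∀ i, MeasurableSet (A i)) (h : iIndepSet A μ) :
    μ.real {ω | ∃! i, ω ∈ A i} =
      ∑ i, μ.real (A i) * ∏ j ∈ univ.erase i, μ.real (A j)ᶜ := by
  have := h.isProbabilityMeasure
  have hmeas : ∀ i, MeasurableSet (⋂ j, if j = i then A j else (A j)ᶜ) := fun i ↦
    .iInter fun j ↦ by split_ifs; exacts [hA j, (hA j).compl]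
  rw [Set.setOf_existsUnique_mem_eq_iUnion,
    measureReal_iUnion_fintype (Set.pairwise_disjoint_iInter_ite A) hmeas]
  refine sum_congr rfl fun i _ ↦ ?_
  rw [h.measureReal_iInter_of_forall_eq_or_eq_compl fun j ↦ by split_ifs <;> simp,
    ← mul_prod_erase univ _ (mem_univ i), if_pos rfl]
  congr 1
  exact prod_congr rfl fun j hj ↦ by rw [if_neg (ne_of_mem_erase hj)]

end Independence

/-- If `A 1, …, A n` are independent events and the probability `x` that
none of them occurs is nonzero, then the probability that exactly one of them occurs is
at least `-x * log x`. -/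
theorem prob_exactly_one_ge_neg_mul_log {Ω : Type*} [MeasurableSpace Ω]
    (μ : Measure Ω) [IsProbabilityMeasure μ] (n : ℕ) (A : Fin n → Set Ω)
    (hAmeas : ∀ i, MeasurableSet (A i)) (hind : iIndepSet A μ)
    (x : ℝ) (hx : x = (μ (⋂ i, (A i)ᶜ)).toReal) (hx0 : x ≠ 0) :
    -x * Real.log x ≤ (μ {ω | ∃! i, ω ∈ A i}).toReal := by
  have hx_prod : x = ∏ i, μ.real (A i)ᶜ :=
    hx.trans (hind.measureReal_iInter_of_forall_eq_or_eq_compl fun _ ↦ .inr rfl)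
  have hpos : ∀ i ∈ univ, 0 < μ.real (A i)ᶜ := fun i hi ↦
    measureReal_nonneg.lt_of_ne' (prod_ne_zero_iff.1 (hx_prod ▸ hx0) i hi)
  have hA_compl : ∀ i, μ.real (A i) = 1 - μ.real (A i)ᶜ := fun i ↦ by
    rw [probReal_compl_eq_one_sub (hAmeas i), sub_sub_cancel]
  rw [← measureReal_def, hind.measureReal_setOf_existsUnique_mem hAmeas, hx_prod]
  simp_rw [hA_compl]
  exact neg_prod_mul_log_prod_le univ hpos
end

section
/- Let X_1, …, X_n be independent random variables taking values in (−∞, ∞] such that for every real t and all distinct indices i, j, the probability that X_i = t and X_j = t simultaneously is zero. Then either the probability that X_i = ∞ for all i is greater than e^{−1}, or there exists a real number t_0 such that the probability that exactly one of the X_i is less than or equal to t_0 is at least 1/5. -/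
open MeasureTheory ProbabilityTheory Set Filter
open scoped ENNReal Topology

/-!
Let `M = minᵢ Xᵢ` be the first arrival time. If `P(M = ∞) ≤ e⁻¹ < 1/2`, there is a real `t₀` with
`q := P(M > t₀) ≤ 1/2 ≤ P(M ≥ t₀)`. Independence gives
`P(exactly one Xᵢ ≤ t₀) ≥ ∑ᵢ P(Xᵢ ≤ t₀) · q ≥ (1 - q) q`, which is at least `1/5` when `q ≥ 3/10`.
Otherwise `P(M = t₀) ≥ 1/2 - q > 1/5`, and since ties at `t₀` are null, on `{M = t₀}` exactly one
`Xᵢ` equals `t₀`.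
-/

theorem lt_iInf_iff_of_lt_top {α ι : Type*} [CompleteLinearOrder α] [Fintype ι] {f : ι → α}
    {a : α} (ha : a < ⊤) : a < ⨅ i, f i ↔ ∀ i, a < f i := by
  rw [← Finset.inf_univ_eq_iInf, Finset.lt_inf_iff ha]
  simp

namespace EReal

theorem antitone_Ioi_coe : Antitone fun s : ℝ => Ioi (s : EReal) :=
  fun _ _ h => Ioi_subset_Ioi (EReal.coe_le_coe_iff.2 h)

theorem iInter_Ioi_coe : ⋂ s : ℝ, Ioi (s : EReal) = {⊤} := by
  ext x
  simp [eq_top_iff_forall_lt]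

theorem iUnion_Ioi_coe : ⋃ s : ℝ, Ioi (s : EReal) = Ioi ⊥ := by
  ext x
  simpa using (lt_iff_exists_real_btwn (a := ⊥) (b := x)).symm

theorem iUnion_Ioi_coe_of_tendsto {u : ℕ → ℝ} {t : ℝ} (hu : Tendsto u atTop (𝓝 t))
    (hgt : ∀ n, t < u n) : ⋃ n, Ioi (u n : EReal) = Ioi (t : EReal) := by
  refine Subset.antisymm (iUnion_subset fun n => antitone_Ioi_coe (hgt n).le) fun x hx => ?_
  obtain ⟨r, htr, hrx⟩ := lt_iff_exists_real_btwn.1 hx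
  obtain ⟨n, hn⟩ := (hu.eventually_lt_const (EReal.coe_lt_coe_iff.1 htr)).exists
  exact mem_iUnion.2 ⟨n, (EReal.coe_lt_coe_iff.2 hn).trans hrx⟩

theorem iInter_Ioi_coe_of_tendsto {v : ℕ → ℝ} {t : ℝ} (hv : Tendsto v atTop (𝓝 t))
    (hlt : ∀ n, v n < t) : ⋂ n, Ioi (v n : EReal) = Ici (t : EReal) := by
  refine Subset.antisymm (fun x hx => ?_)
    (subset_iInter fun n => Ici_subset_Ioi.2 (EReal.coe_lt_coe_iff.2 (hlt n)))
  by_contra hxt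
  obtain ⟨r, hxr, hrt⟩ := lt_iff_exists_real_btwn.1 (not_le.1 hxt)
  obtain ⟨n, hn⟩ := (hv.eventually_const_lt (EReal.coe_lt_coe_iff.1 hrt)).exists
  exact (mem_iInter.1 hx n).not_gt (hxr.trans (EReal.coe_lt_coe_iff.2 hn))

variable (ν : Measure EReal)

theorem measure_Ioi_bot_eq_iSup : ν (Ioi ⊥) = ⨆ s : ℝ, ν (Ioi (s : EReal)) := by
  rw [← iUnion_Ioi_coe, antitone_Ioi_coe.measure_iUnion]

theorem measure_Ioi_coe_eq_iSup (t : ℝ) :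
    ν (Ioi (t : EReal)) = ⨆ (s : ℝ) (_ : t < s), ν (Ioi (s : EReal)) := by
  refine le_antisymm ?_ (iSup₂_le fun s hs => measure_mono (antitone_Ioi_coe hs.le))
  obtain ⟨u, hu_anti, hgt, hu⟩ := exists_seq_strictAnti_tendsto t
  rw [← iUnion_Ioi_coe_of_tendsto hu hgt,
    Monotone.measure_iUnion (s := fun n => Ioi (u n : EReal))
      fun _ _ h => antitone_Ioi_coe (hu_anti.antitone h)]
  exact iSup_le fun n => le_iSup₂_of_le (u n) (hgt n) le_rfl

variable [IsFiniteMeasure ν]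

theorem measure_singleton_top_eq_iInf : ν {⊤} = ⨅ s : ℝ, ν (Ioi (s : EReal)) := by
  rw [← iInter_Ioi_coe, antitone_Ioi_coe.measure_iInter
    (fun _ => measurableSet_Ioi.nullMeasurableSet) ⟨0, measure_ne_top _ _⟩]

theorem measure_Ici_coe_eq_iInf (t : ℝ) :
    ν (Ici (t : EReal)) = ⨅ (s : ℝ) (_ : s < t), ν (Ioi (s : EReal)) := by
  refine le_antisymm
    (le_iInf₂ fun s hs => measure_mono (Ici_subset_Ioi.2 (EReal.coe_lt_coe_iff.2 hs))) ?_
  obtain ⟨v, hv_mono, hlt, hv⟩ := exists_seq_strictMono_tendsto t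
  rw [← iInter_Ioi_coe_of_tendsto hv hlt,
    Antitone.measure_iInter (s := fun n => Ioi (v n : EReal))
      (fun _ _ h => antitone_Ioi_coe (hv_mono.monotone h))
      (fun _ => measurableSet_Ioi.nullMeasurableSet) ⟨0, measure_ne_top _ _⟩]
  exact le_iInf fun n => iInf₂_le (v n) (hlt n)

theorem exists_measure_Ioi_le_le_measure_Ici {c : ℝ≥0∞} (htop : ν {⊤} < c)
    (hbot : c < ν (Ioi ⊥)) : ∃ t : ℝ, ν (Ioi (t : EReal)) ≤ c ∧ c ≤ ν (Ici (t : EReal)) := by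
  set S := {s : ℝ | ν (Ioi (s : EReal)) ≤ c}
  have hanti : Antitone fun s : ℝ => ν (Ioi (s : EReal)) :=
    fun _ _ h => measure_mono (antitone_Ioi_coe h)
  obtain ⟨s₁, hs₁⟩ := iInf_lt_iff.1 (measure_singleton_top_eq_iInf ν ▸ htop)
  obtain ⟨s₀, hs₀⟩ := lt_iSup_iff.1 (measure_Ioi_bot_eq_iSup ν ▸ hbot)
  have hne : S.Nonempty := ⟨s₁, hs₁.le⟩
  have hbdd : BddBelow S :=
    ⟨s₀, fun s hs => le_of_not_gt fun h => (hs₀.trans_le (hanti h.le)).not_ge hs⟩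
  refine ⟨sInf S, ?_, ?_⟩
  · rw [measure_Ioi_coe_eq_iSup]
    refine iSup₂_le fun s hs => ?_
    obtain ⟨r, hrS, hrs⟩ := (csInf_lt_iff hbdd hne).1 hs
    exact (hanti hrs.le).trans hrS
  · rw [measure_Ici_coe_eq_iInf]
    exact le_iInf₂ fun s hs => (not_le.1 fun h => (csInf_le hbdd h).not_gt hs).le

end EReal

namespace ProbabilityTheory.iIndepFun

variable {Ω ι : Type*} [MeasurableSpace Ω] {μ : Measure Ω} [Fintype ι] {β : ι → Type*}
  [∀ i, MeasurableSpace (β i)] {X : ∀ i, Ω → β i} {A : ∀ i, Set (β i)}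

theorem measure_mem_mul_le_measure_only_mem (hX : iIndepFun X μ) (hA : ∀ i, MeasurableSet (A i))
    (i : ι) :
    μ (X i ⁻¹' A i) * μ {ω | ∀ j, X j ω ∉ A j} ≤
      μ {ω | X i ω ∈ A i ∧ ∀ j ≠ i, X j ω ∉ A j} := by
  classical
  have := hX.isProbabilityMeasure
  let B : ∀ j, Set (β j) := fun j => if j = i then A j else (A j)ᶜ
  have hB : ∀ j, MeasurableSet[.comap (X j) inferInstance] (X j ⁻¹' B j) :=
    fun j => ⟨B j, by dsimp only [B]; split_ifs <;> simp [hA j], rfl⟩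
  have hE : {ω | X i ω ∈ A i ∧ ∀ j ≠ i, X j ω ∉ A j} = ⋂ j, X j ⁻¹' B j := by
    ext ω
    simp only [B, mem_ofPred_eq, mem_iInter, mem_preimage]
    refine ⟨fun h j => ?_, fun h => ⟨by simpa using h i, fun j hj => by simpa [hj] using h j⟩⟩
    split_ifs with hj
    · exact hj ▸ h.1
    · exact h.2 j hj
  have hN : μ {ω | ∀ j, X j ω ∉ A j} = ∏ j, μ (X j ⁻¹' (A j)ᶜ) := by
    rw [← hX.meas_iInter fun j => ⟨(A j)ᶜ, (hA j).compl, rfl⟩]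
    congr 1
    ext
    simp
  rw [hE, hX.meas_iInter hB, hN, ← Finset.mul_prod_erase _ _ (Finset.mem_univ i),
    ← Finset.mul_prod_erase _ _ (Finset.mem_univ i)]
  gcongr
  · simp [B]
  · exact (mul_le_of_le_one_left' prob_le_one).trans_eq
      (Finset.prod_congr rfl fun j hj => by simp [B, Finset.ne_of_mem_erase hj])

theorem one_sub_mul_le_measure_existsUnique (hX : iIndepFun X μ)
    (hXm : ∀ i, Measurable (X i)) (hA : ∀ i, MeasurableSet (A i)) :
    (1 - μ {ω | ∀ i, X i ω ∉ A i}) * μ {ω | ∀ i, X i ω ∉ A i} ≤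
      μ {ω | ∃! i, X i ω ∈ A i} := by
  have := hX.isProbabilityMeasure
  set N := {ω | ∀ i, X i ω ∉ A i}
  set E : ι → Set Ω := fun i => {ω | X i ω ∈ A i ∧ ∀ j ≠ i, X j ω ∉ A j}
  have hcover : 1 - μ N ≤ ∑ i, μ (X i ⁻¹' A i) := by
    refine tsub_le_iff_right.2 ?_
    calc 1 = μ univ := measure_univ.symm
      _ ≤ μ ((⋃ i, X i ⁻¹' A i) ∪ N) := measure_mono fun ω _ => by
          by_cases h : ∃ i, X i ω ∈ A i
          · exact Or.inl (mem_iUnion.2 h)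
          · exact Or.inr (not_exists.1 h)
      _ ≤ ∑ i, μ (X i ⁻¹' A i) + μ N :=
          (measure_union_le _ _).trans (by gcongr; exact measure_iUnion_fintype_le _ _)
  have hunion : ⋃ i, E i = {ω | ∃! i, X i ω ∈ A i} := by
    ext ω
    simp only [E, mem_iUnion, mem_ofPred_eq]
    exact exists_congr fun i => and_congr_right fun _ => forall_congr' fun _ => not_imp_not
  have hdisj : Pairwise (Function.onFun Disjoint E) := fun i k hik =>
    Set.disjoint_left.2 fun _ hi hk => hi.2 k (Ne.symm hik) hk.1
  have hE : ∀ i, MeasurableSet (E i) := fun i => by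
    simp only [E, ofPred_and, ofPred_forall]
    exact (hXm i (hA i)).inter (.iInter fun j => .iInter fun _ => (hXm j (hA j)).compl)
  calc (1 - μ N) * μ N ≤ (∑ i, μ (X i ⁻¹' A i)) * μ N := by gcongr
    _ = ∑ i, μ (X i ⁻¹' A i) * μ N := Finset.sum_mul _ _ _
    _ ≤ ∑ i, μ (E i) := Finset.sum_le_sum fun i _ => hX.measure_mem_mul_le_measure_only_mem hA i
    _ = μ {ω | ∃! i, X i ω ∈ A i} := by rw [← hunion, measure_iUnion hdisj hE, tsum_fintype]

end ProbabilityTheory.iIndepFun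

theorem measure_forall_le_le_add_measure_existsUnique {Ω ι α : Type*} [MeasurableSpace Ω]
    {μ : Measure Ω} [Countable ι] [LinearOrder α] {X : ι → Ω → α} {t : α}
    (hties : ∀ i j, i ≠ j → μ {ω | X i ω = t ∧ X j ω = t} = 0) :
    μ {ω | ∀ i, t ≤ X i ω} ≤ μ {ω | ∀ i, t < X i ω} + μ {ω | ∃! i, X i ω ≤ t} := by
  have hae : ∀ᵐ ω ∂μ, ∀ i j, i ≠ j → ¬(X i ω = t ∧ X j ω = t) := by
    refine ae_all_iff.2 fun i => ae_all_iff.2 fun j => ?_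
    by_cases hij : i = j
    · exact Eventually.of_forall fun _ h => (h hij).elim
    · filter_upwards [measure_eq_zero_iff_ae_notMem.1 (hties i j hij)] with ω hω _ using hω
  refine (measure_mono_ae (hae.mono fun ω hω (hge : ∀ i, t ≤ X i ω) => ?_)).trans
    (measure_union_le _ _)
  by_cases hlt : ∀ i, t < X i ω
  · exact Or.inl hlt
  obtain ⟨i, hi⟩ := not_forall.1 hlt
  have hi : X i ω = t := le_antisymm (not_lt.1 hi) (hge i)
  refine Or.inr ⟨i, hi.le, fun j hj => by_contra fun hji => hω j i hji ⟨?_, hi⟩⟩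
  exact le_antisymm hj (hge j)

theorem ENNReal.ofReal_exp_neg_one_lt_half : ENNReal.ofReal (Real.exp (-1)) < 1 / 2 := by
  have h : Real.exp (-1) < 1 / 2 := by
    rw [Real.exp_neg, inv_lt_comm₀ (Real.exp_pos 1) (by norm_num)]
    linarith [Real.add_one_lt_exp (x := 1) one_ne_zero]
  rw [← ENNReal.ofReal_one, ← ENNReal.ofReal_ofNat 2, ← ENNReal.ofReal_div_of_pos (by norm_num)]
  exact (ENNReal.ofReal_lt_ofReal_iff (by norm_num)).2 h

theorem ENNReal.one_fifth_le_of_half_le_add_of_mul_le {q u : ℝ≥0∞} (hq : q ≤ 1 / 2)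
    (hjump : 1 / 2 ≤ q + u) (hprod : (1 - q) * q ≤ u) : 1 / 5 ≤ u := by
  rcases eq_or_ne u ⊤ with rfl | hu
  · exact le_top
  have hq_top : q ≠ ⊤ := ne_top_of_le_ne_top (by norm_num) hq
  rw [← ENNReal.toReal_le_toReal (by norm_num) hu]
  rw [← ENNReal.toReal_le_toReal (by finiteness) (by finiteness), ENNReal.toReal_add hq_top hu]
    at hjump
  rw [← ENNReal.toReal_le_toReal (by finiteness) hu, ENNReal.toReal_mul,
    ENNReal.toReal_sub_of_le (hq.trans (by norm_num)) (by norm_num)] at hprod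
  rw [← ENNReal.toReal_le_toReal hq_top (by norm_num)] at hq
  simp only [ENNReal.toReal_div, ENNReal.toReal_one, ENNReal.toReal_ofNat] at *
  nlinarith [ENNReal.toReal_nonneg (a := q)]

/-- Let `X 1, …, X n` be independent random variables with values in
`(-∞, ∞]` such that for every real `t` and all distinct `i, j`, the probability that
`X i = X j = t` is zero.  Then either the probability that all `X i` are `∞` is greater
than `e⁻¹`, or there is a real `t₀` such that, with probability at least `1/5`, exactly
one of the `X i` is `≤ t₀`. -/
theorem exists_unique_winner {Ω : Type*} [MeasurableSpace Ω]
    (μ : Measure Ω) [IsProbabilityMeasure μ] (n : ℕ) (X : Fin n → Ω → EReal)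
    (hXmeas : ∀ i, Measurable (X i))
    (hXne_bot : ∀ i ω, X i ω ≠ ⊥)
    (hind : iIndepFun X μ)
    (hdistinct : ∀ (t : ℝ) (i j : Fin n), i ≠ j →
      μ {ω | X i ω = (t : EReal) ∧ X j ω = (t : EReal)} = 0) :
    ENNReal.ofReal (Real.exp (-1)) < μ {ω | ∀ i, X i ω = ⊤} ∨
      ∃ t₀ : ℝ, (1 / 5 : ℝ≥0∞) ≤ μ {ω | ∃! i, X i ω ≤ (t₀ : EReal)} := by
  refine or_iff_not_imp_left.2 fun hall => ?_
  set M : Ω → EReal := fun ω => ⨅ i, X i ω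
  have hM : Measurable M := Measurable.iInf hXmeas
  have hM_Ioi : ∀ a : EReal, a < ⊤ → M ⁻¹' Ioi a = {ω | ∀ i, a < X i ω} :=
    fun a ha => ext fun _ => lt_iInf_iff_of_lt_top ha
  have hM_Ici : ∀ a : EReal, M ⁻¹' Ici a = {ω | ∀ i, a ≤ X i ω} := fun _ => ext fun _ => by simp [M]
  have hM_top : M ⁻¹' {⊤} = {ω | ∀ i, X i ω = ⊤} := ext fun _ => iInf_eq_top
  have htop : μ.map M {⊤} < 1 / 2 := by
    rw [Measure.map_apply hM (measurableSet_singleton ⊤), hM_top]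
    exact (not_lt.1 hall).trans_lt ENNReal.ofReal_exp_neg_one_lt_half
  have hbot : 1 / 2 < μ.map M (Ioi ⊥) := by
    rw [Measure.map_apply hM measurableSet_Ioi, hM_Ioi ⊥ bot_lt_top]
    simp [bot_lt_iff_ne_bot, hXne_bot]
  obtain ⟨t₀, hq, hjump⟩ := EReal.exists_measure_Ioi_le_le_measure_Ici (μ.map M) htop hbot
  rw [Measure.map_apply hM measurableSet_Ioi, hM_Ioi _ (EReal.coe_lt_top t₀)] at hq
  rw [Measure.map_apply hM measurableSet_Ici, hM_Ici] at hjump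
  refine ⟨t₀, ENNReal.one_fifth_le_of_half_le_add_of_mul_le hq
    (hjump.trans (measure_forall_le_le_add_measure_existsUnique (hdistinct t₀))) ?_⟩
  simpa [not_le] using
    hind.one_sub_mul_le_measure_existsUnique hXmeas fun _ => measurableSet_Iic (a := (t₀ : EReal))
end

section
/- Let X_1, X_2, … be finite nonnegative independent identically distributed real random variables whose common distribution is not concentrated on a single point, and define S_n = ∑_{i=1}^n X_i. Then for every real c > 0 there exist a positive integer n and a real number t such that P(S_n < t) < 1/2 but P(S_n < t − c) > 0. -/
/-! Let `a` be the essential infimum of the common law and pick `b > a` with `P(X ≥ b) > 0`, so that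
`r = P(X < b) < 1`. Split the first `n = K m` indices into `K` blocks of length `m`. Almost surely
every `X i ≥ a`, so if every block also contains some `X i ≥ b`, then `S n ≥ n a + K (b - a) =: t`.
Hence `P(S n < t) ≤ K r ^ m`, which is `< 1/2` for large `m`. Taking `K (b - a) > c` makes
`(t - c) / n > a`, so each `X i` lies below `(t - c) / n` with positive probability, and by
independence so do all of them at once, forcing `S n < t - c`. -/

open MeasureTheory ProbabilityTheory Filter Finset
open scoped ENNReal

namespace MeasureTheory

variable {α : Type*} [MeasurableSpace α] {μ : Measure α} {f : α → ℝ}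

theorem isCoboundedUnder_ge_ae [NeZero μ] : IsCoboundedUnder (· ≥ ·) (ae μ) f := by
  obtain ⟨n, hn⟩ : ∃ n : ℕ, μ {x | f x ≤ n} ≠ 0 := by
    by_contra! h
    have hcover : (⋃ n : ℕ, {x | f x ≤ n}) = Set.univ :=
      Set.iUnion_eq_univ_iff.2 fun x ↦ exists_nat_ge (f x)
    exact NeZero.ne μ (by simpa [hcover] using measure_iUnion_null h)
  exact IsCoboundedUnder.of_frequently_le (frequently_ae_iff.2 hn)

theorem measure_lt_pos_of_essInf_lt [NeZero μ] {x : ℝ} (hx : essInf f μ < x) :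
    0 < μ {y | f y < x} := by
  refine pos_iff_ne_zero.2 fun h ↦ hx.not_ge (le_essInf_of_ae_le x ?_ isCoboundedUnder_ge_ae)
  simpa [EventuallyLE, ae_iff] using h

theorem exists_essInf_lt_measure_le_pos [IsProbabilityMeasure μ] (hf : Measurable f)
    (hbdd : IsBoundedUnder (· ≥ ·) (ae μ) f) (hnondeg : ∀ a, μ {x | f x = a} ≠ 1) :
    ∃ b, essInf f μ < b ∧ 0 < μ {x | b ≤ f x} := by
  by_contra! h
  have hlt : ∀ᵐ x ∂μ, ∀ n : ℕ, f x < essInf f μ + 1 / (n + 1) := by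
    refine ae_all_iff.2 fun n ↦ ?_
    have := h (essInf f μ + 1 / (n + 1)) (by simp; positivity)
    simpa [ae_iff] using nonpos_iff_eq_zero.1 this
  have heq : ∀ᵐ x ∂μ, f x = essInf f μ := by
    filter_upwards [hlt, ae_essInf_le hbdd] with x hx hge
    refine le_antisymm (le_of_forall_pos_lt_add fun ε hε ↦ ?_) hge
    obtain ⟨n, hn⟩ := exists_nat_one_div_lt hε
    linarith [hx n]
  refine hnondeg (essInf f μ) ?_
  rwa [ae_iff_measure_eq (measurableSet_eq_fun hf measurable_const).nullMeasurableSet,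
    measure_univ] at heq

end MeasureTheory

theorem Finset.card_mul_add_card_filter_mul_le_sum {ι : Type*} (s : Finset ι) (f : ι → ℝ)
    {a b : ℝ} (ha : ∀ i ∈ s, a ≤ f i) :
    #s * a + #{i ∈ s | b ≤ f i} * (b - a) ≤ ∑ i ∈ s, f i := by
  have hpoint : ∀ i ∈ s, a + (if b ≤ f i then b - a else 0) ≤ f i := by
    intro i hi
    split_ifs with hb <;> linarith [ha i hi]
  calc #s * a + #{i ∈ s | b ≤ f i} * (b - a)
      = ∑ i ∈ s, (a + if b ≤ f i then b - a else 0) := by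
        rw [sum_add_distrib, sum_ite, sum_const_zero]
        simp [mul_sub]
    _ ≤ ∑ i ∈ s, f i := sum_le_sum hpoint

theorem Finset.le_card_filter_of_forall_block {p : ℕ → Prop} [DecidablePred p] {K m : ℕ}
    (hblock : ∀ j < K, ∃ i ∈ Ico (j * m) (j * m + m), p i) :
    K ≤ #{i ∈ range (K * m) | p i} := by
  choose! g hg hpg using hblock
  have hbounds : ∀ j < K, j * m ≤ g j ∧ g j < (j + 1) * m := fun j hj ↦ by
    simpa [add_one_mul] using hg j hj
  have hdiv : ∀ j < K, g j / m = j := fun j hj ↦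
    Nat.div_eq_of_lt_le (hbounds j hj).1 (hbounds j hj).2
  simpa using card_le_card_of_injOn (s := range K) (t := {i ∈ range (K * m) | p i}) g
    (fun j hj ↦ by
      have hj := mem_range.1 hj
      have hlt : g j < K * m := (hbounds j hj).2.trans_le (Nat.mul_le_mul_right m hj)
      simpa [hlt] using hpg j hj)
    (fun j hj k hk hjk ↦ by
      rw [← hdiv j (mem_range.1 hj), ← hdiv k (mem_range.1 hk), hjk])

theorem add_mul_sub_le_sum_of_forall_block (f : ℕ → ℝ) {a b : ℝ} (hab : a ≤ b) {K m : ℕ}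
    (ha : ∀ i < K * m, a ≤ f i) (hb : ∀ j < K, ∃ i ∈ Ico (j * m) (j * m + m), b ≤ f i) :
    (K * m : ℕ) * a + K * (b - a) ≤ ∑ i ∈ range (K * m), f i := by
  have hcount : (K : ℝ) ≤ #{i ∈ range (K * m) | b ≤ f i} := by
    exact_mod_cast le_card_filter_of_forall_block hb
  have hsum := card_mul_add_card_filter_mul_le_sum (range (K * m)) f (b := b)
    fun i hi ↦ ha i (mem_range.1 hi)
  rw [card_range] at hsum
  linarith [mul_le_mul_of_nonneg_right hcount (sub_nonneg.2 hab)]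

namespace ProbabilityTheory.iIndepFun

variable {Ω : Type*} [MeasurableSpace Ω] {μ : Measure Ω}

theorem measure_iInter_preimage_eq_pow {ι β : Type*} [MeasurableSpace β] {X : ι → Ω → β}
    {Y : Ω → β} (hind : iIndepFun X μ) (hid : ∀ i, IdentDistrib (X i) Y μ μ) (s : Finset ι)
    {A : Set β} (hA : MeasurableSet A) :
    μ (⋂ i ∈ s, X i ⁻¹' A) = μ (Y ⁻¹' A) ^ #s := by
  rw [hind.measure_inter_preimage_eq_mul s (sets := fun _ ↦ A) fun _ _ ↦ hA, ← prod_const]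
  exact prod_congr rfl fun i _ ↦ (hid i).measure_mem_eq hA

variable {X : ℕ → Ω → ℝ} (hind : iIndepFun X μ) (hid : ∀ i, IdentDistrib (X i) (X 0) μ μ)
include hind hid

theorem measure_sum_lt_le {a b : ℝ} (hab : a ≤ b) (ha : μ {ω | X 0 ω < a} = 0) (K m : ℕ) :
    μ {ω | ∑ i ∈ range (K * m), X i ω < (K * m : ℕ) * a + K * (b - a)} ≤
      K * μ {ω | X 0 ω < b} ^ m := by
  have hsub : {ω | ∑ i ∈ range (K * m), X i ω < (K * m : ℕ) * a + K * (b - a)} ⊆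
      (⋃ i ∈ range (K * m), X i ⁻¹' Set.Iio a) ∪
        ⋃ j ∈ range K, ⋂ i ∈ Ico (j * m) (j * m + m), X i ⁻¹' Set.Iio b := by
    intro ω hω
    by_contra hnot
    refine hω.not_ge (add_mul_sub_le_sum_of_forall_block (X · ω) hab (fun i hi ↦ ?_) fun j hj ↦ ?_)
    · by_contra h
      exact hnot (Or.inl (Set.mem_biUnion (mem_range.2 hi) (not_le.1 h)))
    · by_contra! h
      exact hnot (Or.inr (Set.mem_biUnion (mem_range.2 hj) (Set.mem_iInter₂.2 h)))
  have hlow : μ (⋃ i ∈ range (K * m), X i ⁻¹' Set.Iio a) = 0 :=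
    (measure_biUnion_null_iff (range (K * m)).countable_toSet).2 fun i _ ↦
      ((hid i).measure_mem_eq measurableSet_Iio).trans ha
  calc _ ≤ μ ((⋃ i ∈ range (K * m), X i ⁻¹' Set.Iio a) ∪
          ⋃ j ∈ range K, ⋂ i ∈ Ico (j * m) (j * m + m), X i ⁻¹' Set.Iio b) := measure_mono hsub
    _ ≤ ∑ j ∈ range K, μ (⋂ i ∈ Ico (j * m) (j * m + m), X i ⁻¹' Set.Iio b) := by
      refine (measure_union_le _ _).trans ?_
      rw [hlow, zero_add]
      exact measure_biUnion_finset_le _ _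
    _ = K * μ {ω | X 0 ω < b} ^ m := by
      rw [sum_congr rfl fun j _ ↦ hind.measure_iInter_preimage_eq_pow hid _ measurableSet_Iio]
      simp [Set.preimage, Set.Iio]

theorem measure_sum_lt_pos {n : ℕ} (hn : 0 < n) {y : ℝ} (hy : 0 < μ {ω | X 0 ω < y / n}) :
    0 < μ {ω | ∑ i ∈ range n, X i ω < y} := by
  have hsub : (⋂ i ∈ range n, X i ⁻¹' Set.Iio (y / n)) ⊆ {ω | ∑ i ∈ range n, X i ω < y} := by
    intro ω hω
    simp only [Set.mem_iInter, Set.mem_preimage, Set.mem_Iio] at hω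
    calc ∑ i ∈ range n, X i ω < ∑ _i ∈ range n, y / n :=
          sum_lt_sum_of_nonempty (nonempty_range_iff.2 hn.ne') hω
      _ = y := by simp; field_simp
  refine lt_of_lt_of_le ?_ (measure_mono hsub)
  rw [hind.measure_iInter_preimage_eq_pow hid _ measurableSet_Iio]
  exact ENNReal.pow_pos hy _

end ProbabilityTheory.iIndepFun

theorem exists_gap_general {Ω : Type*} [MeasurableSpace Ω]
    (μ : Measure Ω) [IsProbabilityMeasure μ] (X : ℕ → Ω → ℝ)
    (hXmeas : ∀ i, Measurable (X i))
    (hXnonneg : ∀ i ω, 0 ≤ X i ω)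
    (hind : iIndepFun X μ)
    (hid : ∀ i, Measure.map (X i) μ = Measure.map (X 0) μ)
    (hnondeg : ∀ a : ℝ, μ {ω | X 0 ω = a} ≠ 1)
    (c : ℝ) :
    ∃ n : ℕ, 0 < n ∧ ∃ t : ℝ,
      μ {ω | (∑ i ∈ Finset.range n, X i ω) < t} < 1 / 2 ∧
      0 < μ {ω | (∑ i ∈ Finset.range n, X i ω) < t - c} := by
  have hident i : IdentDistrib (X i) (X 0) μ μ :=
    ⟨(hXmeas i).aemeasurable, (hXmeas 0).aemeasurable, hid i⟩
  set a := essInf (X 0) μ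
  have hbdd : IsBoundedUnder (· ≥ ·) (ae μ) (X 0) :=
    isBoundedUnder_of_eventually_ge (ae_of_all _ (hXnonneg 0))
  obtain ⟨b, hab, hb⟩ := exists_essInf_lt_measure_le_pos (hXmeas 0) hbdd hnondeg
  have hr : μ {ω | X 0 ω < b} < 1 := by
    have hcompl : {ω | X 0 ω < b} = {ω | b ≤ X 0 ω}ᶜ := by ext; simp
    rw [hcompl, prob_compl_eq_one_sub (measurableSet_le measurable_const (hXmeas 0))]
    exact ENNReal.sub_lt_self ENNReal.one_ne_top one_ne_zero hb.ne'
  obtain ⟨K, hK, hK1⟩ : ∃ K : ℕ, c < K * (b - a) ∧ 1 ≤ K :=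
    (((tendsto_natCast_atTop_atTop.atTop_mul_const (sub_pos.2 hab)).eventually_gt_atTop c).and
      (eventually_ge_atTop 1)).exists
  obtain ⟨m, hm, hm1⟩ : ∃ m : ℕ, (K : ℝ≥0∞) * μ {ω | X 0 ω < b} ^ m < 1 / 2 ∧ 1 ≤ m := by
    have h := ENNReal.Tendsto.const_mul (ENNReal.tendsto_pow_atTop_nhds_zero_of_lt_one hr)
      (Or.inr (ENNReal.natCast_ne_top K))
    rw [mul_zero] at h
    exact ((h.eventually_lt_const (by norm_num)).and (eventually_ge_atTop 1)).exists
  have hn : 0 < K * m := Nat.mul_pos hK1 hm1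
  refine ⟨K * m, hn, (K * m : ℕ) * a + K * (b - a), ?_, ?_⟩
  · exact (hind.measure_sum_lt_le hident hab.le (meas_lt_essInf hbdd) K m).trans_lt hm
  · refine hind.measure_sum_lt_pos hident hn (measure_lt_pos_of_essInf_lt ?_)
    rw [lt_div_iff₀ (by exact_mod_cast hn)]
    linarith

/-- Let `X 0, X 1, …` be finite nonnegative i.i.d. real random variables
whose common distribution is not concentrated on a point, and let
`S n = ∑_{i<n} X i`.  Then for every `c > 0` there are `n ≥ 1` and `t : ℝ` with
`P(S n < t) < 1/2` but `P(S n < t - c) > 0`. -/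
theorem exists_gap {Ω : Type*} [MeasurableSpace Ω]
    (μ : Measure Ω) [IsProbabilityMeasure μ] (X : ℕ → Ω → ℝ)
    (hXmeas : ∀ i, Measurable (X i))
    (hXnonneg : ∀ i ω, 0 ≤ X i ω)
    (hind : iIndepFun X μ)
    (hid : ∀ i, Measure.map (X i) μ = Measure.map (X 0) μ)
    (hnondeg : ∀ a : ℝ, μ {ω | X 0 ω = a} ≠ 1)
    (c : ℝ) (hc : 0 < c) :
    ∃ n : ℕ, 0 < n ∧ ∃ t : ℝ,
      μ {ω | (∑ i ∈ Finset.range n, X i ω) < t} < 1 / 2 ∧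
      0 < μ {ω | (∑ i ∈ Finset.range n, X i ω) < t - c} :=
  exists_gap_general μ X hXmeas hXnonneg hind hid hnondeg c
end

section
/- Fix c > 0 and let X_1, X_2, … be finite independent identically distributed real random variables such that for some real threshold t_0, P(X_1 < t_0) < 1/2 and P(X_1 < t_0 − c) = δ_0 > 0. Define S_n = ∑_{i=1}^n X_i. Then there exists a constant C > 0 (independent of ε) such that for every ε ∈ (0,1) there exists a positive integer n ≤ C·(ln(1/ε) + 1) with the property that for every real t, if P(S_n < t) > ε then P(S_n < t − c) > (δ_0/7)·P(S_n < t). -/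
/-!
Take `n = 6m` with `m ≍ log (1/ε)`. Since `P(X < t₀) < 1/2`, a union bound over index sets
shows that, outside an event of probability at most `2⁻ᵐ ≤ ε/7`, at least `m` of the `n`
summands satisfy `X i ≥ t₀`. If moreover `S < t`, then for each such `i` the remainder
`S - X i` is below `t - t₀`; it is independent of `X i`, and `X i < t₀ - c` (probability `δ₀`)
then forces `S < t - c`. Double counting these indices gives
`δ₀ · m · (P(S < t) - ε/7) ≤ n · P(S < t - c)`, and `P(S < t) > ε` turns this into the claim.
-/

open MeasureTheory ProbabilityTheory Finset
open scoped ENNReal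

theorem choose_mul_pow_le_add_pow {R : Type*} [CommSemiring R] [PartialOrder R] [IsOrderedRing R]
    {x : R} (hx : 0 ≤ x) (n k : ℕ) : n.choose k * x ^ k ≤ (x + 1) ^ n := by
  rcases le_or_gt k n with hk | hk
  · rw [add_pow]
    calc (n.choose k : R) * x ^ k = x ^ k * 1 ^ (n - k) * n.choose k := by ring
      _ ≤ ∑ j ∈ range (n + 1), x ^ j * 1 ^ (n - j) * n.choose j :=
        single_le_sum (f := fun j => x ^ j * 1 ^ (n - j) * (n.choose j : R))
          (fun j _ => mul_nonneg (mul_nonneg (pow_nonneg hx j) (pow_nonneg zero_le_one _))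
            (Nat.cast_nonneg _)) (mem_range.mpr (Nat.lt_succ_of_le hk))
  · rw [Nat.choose_eq_zero_of_lt hk, Nat.cast_zero, zero_mul]
    exact pow_nonneg (add_nonneg hx zero_le_one) n

theorem choose_six_mul_le (m : ℕ) : (6 * m).choose (5 * m + 1) ≤ 2 ^ (4 * m + 1) := by
  have h := choose_mul_pow_le_add_pow (Nat.zero_le 5) (6 * m) (5 * m + 1)
  have h6 : (5 + 1) ^ (6 * m) ≤ 5 ^ (5 * m + 1) * 2 ^ (4 * m + 1) := by
    calc (5 + 1) ^ (6 * m) = 46656 ^ m := by rw [pow_mul]; norm_num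
      _ ≤ 50000 ^ m := Nat.pow_le_pow_left (by norm_num) m
      _ = 5 ^ (5 * m) * 2 ^ (4 * m) := by rw [pow_mul, pow_mul, ← mul_pow]; norm_num
      _ ≤ 5 ^ (5 * m + 1) * 2 ^ (4 * m + 1) := by gcongr <;> omega
  rw [mul_comm] at h
  exact le_of_mul_le_mul_left (h.trans h6) (by positivity)

theorem half_pow_le_div_seven {ε : ℝ} (hε0 : 0 < ε) (hε1 : ε < 1) {m : ℕ}
    (hm : 3 * (Real.log (1 / ε) + 1) ≤ m) : (1 / 2 : ℝ) ^ m ≤ ε / 7 := by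
  have hL : 0 < Real.log (1 / ε) := Real.log_pos (by rw [lt_div_iff₀ hε0]; linarith)
  have hlog2 : 2 / 3 < Real.log 2 := by linarith [Real.log_two_gt_d9]
  have he2 : 7 < Real.exp 2 := by
    have := Real.exp_one_gt_d9
    rw [show (2 : ℝ) = 1 + 1 by norm_num, Real.exp_add]; nlinarith
  have h2m : 7 / ε ≤ 2 ^ m := calc
    7 / ε ≤ Real.exp 2 * Real.exp (Real.log (1 / ε)) := by
        rw [Real.exp_log (by positivity), mul_one_div]; gcongr
    _ = Real.exp (Real.log (1 / ε) + 2) := by rw [Real.exp_add, mul_comm]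
    _ ≤ Real.exp (m * Real.log 2) := by gcongr; nlinarith
    _ = 2 ^ m := by rw [← Real.log_pow, Real.exp_log (by positivity)]
  rw [div_le_iff₀ hε0] at h2m
  rw [one_div_pow, div_le_div_iff₀ (by positivity) (by norm_num)]
  linarith

open scoped Classical in
theorem natCast_mul_measure_le_sum_measure_inter {α ι : Type*} [MeasurableSpace α]
    (μ : Measure α) (s : Finset ι) {B : Set α} {C : ι → Set α} (hC : ∀ i, MeasurableSet (C i))
    {m : ℕ} (hm : ∀ ω ∈ B, m ≤ #{i ∈ s | ω ∈ C i}) :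
    m * μ B ≤ ∑ i ∈ s, μ (C i ∩ B) := by
  calc (m : ℝ≥0∞) * μ B = ∫⁻ _ in B, (m : ℝ≥0∞) ∂μ := (setLIntegral_const B _).symm
    _ ≤ ∫⁻ ω in B, ∑ i ∈ s, (C i).indicator 1 ω ∂μ := by
        refine setLIntegral_mono (Finset.measurable_sum _ fun i _ =>
          measurable_one.indicator (hC i)) fun ω hω => ?_
        simp only [Set.indicator_apply, Pi.one_apply, sum_boole]
        exact_mod_cast hm ω hω
    _ = ∑ i ∈ s, μ (C i ∩ B) := by
        rw [lintegral_finsetSum _ fun i _ => measurable_one.indicator (hC i)]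
        refine sum_congr rfl fun i _ => ?_
        rw [lintegral_indicator_one (hC i), Measure.restrict_apply (hC i)]

section IndependentSums

variable {Ω ι : Type*} [MeasurableSpace Ω] {μ : Measure Ω} {X : ι → Ω → ℝ}

theorem measure_le_card_filter_lt_le (hind : iIndepFun X μ) (s : Finset ι) (k : ℕ) (t₀ : ℝ)
    {p : ℝ≥0∞} (hp : ∀ i ∈ s, μ {ω | X i ω < t₀} ≤ p) :
    μ {ω | k ≤ #{i ∈ s | X i ω < t₀}} ≤ (#s).choose k * p ^ k := by
  classical
  have hsub : {ω | k ≤ #{i ∈ s | X i ω < t₀}} ⊆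
      ⋃ T ∈ powersetCard k s, ⋂ i ∈ T, {ω | X i ω < t₀} := by
    intro ω hω
    obtain ⟨T, hT, hTcard⟩ := exists_subset_card_eq hω
    exact Set.mem_biUnion (mem_powersetCard.mpr ⟨hT.trans (filter_subset _ _), hTcard⟩)
      (Set.mem_iInter₂.mpr fun i hi => (mem_filter.mp (hT hi)).2)
  have hinter : ∀ T ∈ powersetCard k s, μ (⋂ i ∈ T, {ω | X i ω < t₀}) ≤ p ^ k := by
    intro T hT
    obtain ⟨hTs, rfl⟩ := mem_powersetCard.mp hT
    rw [hind.meas_biInter (s := fun i => {ω | X i ω < t₀})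
      fun i _ => ⟨Set.Iio t₀, measurableSet_Iio, rfl⟩]
    exact prod_le_pow_card _ _ _ fun i hi => hp i (hTs hi)
  calc μ {ω | k ≤ #{i ∈ s | X i ω < t₀}}
      ≤ ∑ T ∈ powersetCard k s, μ (⋂ i ∈ T, {ω | X i ω < t₀}) :=
        (measure_mono hsub).trans (measure_biUnion_finset_le _ _)
    _ ≤ ∑ T ∈ powersetCard k s, p ^ k := sum_le_sum hinter
    _ = (#s).choose k * p ^ k := by rw [sum_const, card_powersetCard, nsmul_eq_mul]

theorem measure_lt_mul_measure_sum_lt_inter_le [DecidableEq ι] (hmeas : ∀ i, Measurable (X i))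
    (hind : iIndepFun X μ) {s : Finset ι} {i : ι} (hi : i ∈ s) (t t₀ c : ℝ) :
    μ {ω | X i ω < t₀ - c} * μ ({ω | t₀ ≤ X i ω} ∩ {ω | ∑ j ∈ s, X j ω < t}) ≤
      μ {ω | ∑ j ∈ s, X j ω < t - c} := by
  set R := ∑ j ∈ s.erase i, X j
  have hsplit : ∀ ω, R ω + X i ω = ∑ j ∈ s, X j ω := fun ω => by
    simp only [R, Finset.sum_apply, sum_erase_add _ _ hi]
  have hindep : IndepFun R (X i) μ := hind.indepFun_finsetSum_of_notMem hmeas (notMem_erase i s)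
  calc μ {ω | X i ω < t₀ - c} * μ ({ω | t₀ ≤ X i ω} ∩ {ω | ∑ j ∈ s, X j ω < t})
      ≤ μ (X i ⁻¹' Set.Iio (t₀ - c)) * μ (R ⁻¹' Set.Iio (t - t₀)) := by
        refine mul_le_mul_right (measure_mono fun ω (hω : t₀ ≤ X i ω ∧ ∑ j ∈ s, X j ω < t) => ?_) _
        show R ω < t - t₀
        linarith [hsplit ω, hω.1, hω.2]
    _ = μ (R ⁻¹' Set.Iio (t - t₀) ∩ X i ⁻¹' Set.Iio (t₀ - c)) := by
        rw [hindep.measure_inter_preimage_eq_mul _ _ measurableSet_Iio measurableSet_Iio, mul_comm]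
    _ ≤ μ {ω | ∑ j ∈ s, X j ω < t - c} := by
        refine measure_mono fun ω (hω : R ω < t - t₀ ∧ X i ω < t₀ - c) => ?_
        show ∑ j ∈ s, X j ω < t - c
        linarith [hsplit ω, hω.1, hω.2]

theorem natCast_mul_measure_sum_lt_inter_le [DecidableEq ι] (hmeas : ∀ i, Measurable (X i))
    (hind : iIndepFun X μ) (s : Finset ι) (t t₀ c : ℝ) {δ : ℝ≥0∞}
    (hδ : ∀ i ∈ s, δ ≤ μ {ω | X i ω < t₀ - c}) (m : ℕ) :
    m * (δ * μ ({ω | ∑ j ∈ s, X j ω < t} ∩ {ω | m ≤ #{i ∈ s | t₀ ≤ X i ω}})) ≤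
      #s * μ {ω | ∑ j ∈ s, X j ω < t - c} := by
  set B := {ω | ∑ j ∈ s, X j ω < t} ∩ {ω | m ≤ #{i ∈ s | t₀ ≤ X i ω}}
  have hcount : m * μ B ≤ ∑ i ∈ s, μ ({ω | t₀ ≤ X i ω} ∩ B) :=
    natCast_mul_measure_le_sum_measure_inter μ s
      (fun i => measurableSet_le measurable_const (hmeas i)) fun ω hω => by simpa [B] using hω.2
  calc (m : ℝ≥0∞) * (δ * μ B) = δ * (m * μ B) := mul_left_comm _ _ _
    _ ≤ ∑ i ∈ s, δ * μ ({ω | t₀ ≤ X i ω} ∩ B) := by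
        rw [← mul_sum]; exact mul_le_mul_right hcount δ
    _ ≤ ∑ i ∈ s, μ {ω | ∑ j ∈ s, X j ω < t - c} := by
        refine sum_le_sum fun i hi => le_trans ?_
          (measure_lt_mul_measure_sum_lt_inter_le hmeas hind hi t t₀ c)
        exact mul_le_mul' (hδ i hi) (measure_mono (Set.inter_subset_inter_right _
          Set.inter_subset_left))
    _ = #s * μ {ω | ∑ j ∈ s, X j ω < t - c} := by rw [sum_const, nsmul_eq_mul]

theorem mul_measureReal_sum_lt_sub_half_pow_le [IsProbabilityMeasure μ] [DecidableEq ι]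
    (hmeas : ∀ i, Measurable (X i)) (hind : iIndepFun X μ) {s : Finset ι} {m : ℕ}
    (hm : 0 < m) (hs : #s = 6 * m) (t t₀ c : ℝ) {δ₀ : ℝ} (hδ₀ : 0 ≤ δ₀)
    (hp : ∀ i ∈ s, μ {ω | X i ω < t₀} ≤ 2⁻¹)
    (hδ : ∀ i ∈ s, ENNReal.ofReal δ₀ ≤ μ {ω | X i ω < t₀ - c}) :
    δ₀ * (μ.real {ω | ∑ j ∈ s, X j ω < t} - (1 / 2) ^ m) ≤
      6 * μ.real {ω | ∑ j ∈ s, X j ω < t - c} := by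
  set A := {ω | ∑ j ∈ s, X j ω < t}
  set G := {ω | m ≤ #{i ∈ s | t₀ ≤ X i ω}}
  set U := {ω | 5 * m + 1 ≤ #{i ∈ s | X i ω < t₀}}
  have hcover : A ⊆ (A ∩ G) ∪ U := by
    intro ω hω
    have hcard := card_filter_add_card_filter_not (s := s) (p := fun i => t₀ ≤ X i ω)
    simp only [not_le] at hcard
    by_cases hG : m ≤ #{i ∈ s | t₀ ≤ X i ω}
    · exact Or.inl ⟨hω, hG⟩
    · exact Or.inr (show 5 * m + 1 ≤ _ by omega)
  have hU : μ.real U ≤ (1 / 2) ^ m := by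
    have h := measure_le_card_filter_lt_le hind s (5 * m + 1) t₀ hp
    rw [hs] at h
    have hreal := ENNReal.toReal_mono (by finiteness) h
    simp only [ENNReal.toReal_mul, ENNReal.toReal_pow, ENNReal.toReal_inv, ENNReal.toReal_natCast,
      ENNReal.toReal_ofNat] at hreal
    calc μ.real U ≤ ((6 * m).choose (5 * m + 1) : ℝ) * 2⁻¹ ^ (5 * m + 1) := hreal
      _ ≤ (2 ^ (4 * m + 1) : ℕ) * 2⁻¹ ^ (5 * m + 1) := by gcongr; exact choose_six_mul_le m
      _ = (1 / 2) ^ m := by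
        rw [Nat.cast_pow, Nat.cast_ofNat, show 5 * m + 1 = m + (4 * m + 1) by ring,
          pow_add 2⁻¹ m, mul_left_comm, ← mul_pow, mul_inv_cancel₀ two_ne_zero, one_pow, mul_one,
          one_div]
  have hG : δ₀ * μ.real (A ∩ G) ≤ 6 * μ.real {ω | ∑ j ∈ s, X j ω < t - c} := by
    have h := (natCast_mul_measure_sum_lt_inter_le hmeas hind s t t₀ c hδ m).trans_eq
      (show (#s : ℝ≥0∞) * μ {ω | ∑ j ∈ s, X j ω < t - c} =
        m * (6 * μ {ω | ∑ j ∈ s, X j ω < t - c}) by rw [hs]; push_cast; ring)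
    rw [ENNReal.mul_le_mul_iff_right (by exact_mod_cast hm.ne') (ENNReal.natCast_ne_top m)] at h
    have hreal := ENNReal.toReal_mono (by finiteness) h
    simpa only [ENNReal.toReal_mul, ENNReal.toReal_ofReal hδ₀, ENNReal.toReal_ofNat,
      ← measureReal_def] using hreal
  have hA : μ.real A ≤ μ.real (A ∩ G) + μ.real U :=
    (measureReal_mono hcover).trans (measureReal_union_le _ _)
  calc δ₀ * (μ.real A - (1 / 2) ^ m) ≤ δ₀ * μ.real (A ∩ G) :=
        mul_le_mul_of_nonneg_left (by linarith) hδ₀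
    _ ≤ _ := hG

end IndependentSums

theorem gap_relative_general {Ω : Type*} [MeasurableSpace Ω]
    (μ : Measure Ω) [IsProbabilityMeasure μ] (X : ℕ → Ω → ℝ)
    (hXmeas : ∀ i, Measurable (X i))
    (hind : iIndepFun X μ)
    (hid : ∀ i, Measure.map (X i) μ = Measure.map (X 0) μ)
    (c : ℝ) (t₀ δ₀ : ℝ)
    (ht₀ : μ {ω | X 0 ω < t₀} < 1 / 2)
    (hδ₀ : μ {ω | X 0 ω < t₀ - c} = ENNReal.ofReal δ₀)
    (hδ₀pos : 0 < δ₀) :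
    ∃ C : ℝ, 0 < C ∧ ∀ ε : ℝ, 0 < ε → ε < 1 →
      ∃ n : ℕ, 0 < n ∧ (n : ℝ) ≤ C * (Real.log (1 / ε) + 1) ∧
        ∀ t : ℝ, ENNReal.ofReal ε < μ {ω | (∑ i ∈ Finset.range n, X i ω) < t} →
          (δ₀ / 7) * (μ {ω | (∑ i ∈ Finset.range n, X i ω) < t}).toReal <
            (μ {ω | (∑ i ∈ Finset.range n, X i ω) < t - c}).toReal := by
  have hcdf : ∀ i u, μ {ω | X i ω < u} = μ {ω | X 0 ω < u} := fun i u =>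
    (IdentDistrib.mk (hXmeas i).aemeasurable (hXmeas 0).aemeasurable (hid i)).measure_mem_eq
      measurableSet_Iio
  refine ⟨24, by norm_num, fun ε hε0 hε1 => ?_⟩
  have hL : 0 ≤ Real.log (1 / ε) := Real.log_nonneg (by rw [le_div_iff₀ hε0]; linarith)
  set m := ⌈3 * (Real.log (1 / ε) + 1)⌉₊
  have hm : 3 * (Real.log (1 / ε) + 1) ≤ m := Nat.le_ceil _
  have hm_lt : (m : ℝ) < 3 * (Real.log (1 / ε) + 1) + 1 := Nat.ceil_lt_add_one (by positivity)
  have hm_pos : 0 < m := by exact_mod_cast (show (0 : ℝ) < m by linarith)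
  refine ⟨6 * m, by omega, by push_cast; linarith, fun t ht => ?_⟩
  have hgap := mul_measureReal_sum_lt_sub_half_pow_le hXmeas hind hm_pos (card_range _) t t₀ c
    hδ₀pos.le (fun i _ => by rw [hcdf, ← one_div]; exact ht₀.le) (fun i _ => by rw [hcdf, hδ₀])
  have hhalf := half_pow_le_div_seven hε0 hε1 hm
  have hε := (ENNReal.ofReal_lt_iff_lt_toReal hε0.le (measure_ne_top _ _)).mp ht
  change δ₀ / 7 * μ.real _ < μ.real _
  change ε < μ.real _ at hε
  have : δ₀ * (1 / 2) ^ m < δ₀ * (μ.real {ω | ∑ i ∈ range (6 * m), X i ω < t} / 7) :=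
    mul_lt_mul_of_pos_left (by linarith) hδ₀pos
  linarith

/-- Fix `c > 0` and let `X 0, X 1, …` be i.i.d. real random variables
with `P(X < t₀) < 1/2` and `P(X < t₀ - c) = δ₀ > 0` for some threshold `t₀`.  With
`S n = ∑_{i<n} X i`, there is a constant `C > 0` such that for every `ε ∈ (0,1)` there is
`n ≥ 1` with `n ≤ C (log (1/ε) + 1)` such that for every real `t`, if `P(S n < t) > ε`
then `P(S n < t - c) > (δ₀ / 7) P(S n < t)`. -/
theorem gap_relative {Ω : Type*} [MeasurableSpace Ω]
    (μ : Measure Ω) [IsProbabilityMeasure μ] (X : ℕ → Ω → ℝ)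
    (hXmeas : ∀ i, Measurable (X i))
    (hind : iIndepFun X μ)
    (hid : ∀ i, Measure.map (X i) μ = Measure.map (X 0) μ)
    (c : ℝ) (hc : 0 < c) (t₀ δ₀ : ℝ)
    (ht₀ : μ {ω | X 0 ω < t₀} < 1 / 2)
    (hδ₀ : μ {ω | X 0 ω < t₀ - c} = ENNReal.ofReal δ₀)
    (hδ₀pos : 0 < δ₀) :
    ∃ C : ℝ, 0 < C ∧ ∀ ε : ℝ, 0 < ε → ε < 1 →
      ∃ n : ℕ, 0 < n ∧ (n : ℝ) ≤ C * (Real.log (1 / ε) + 1) ∧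
        ∀ t : ℝ, ENNReal.ofReal ε < μ {ω | (∑ i ∈ Finset.range n, X i ω) < t} →
          (δ₀ / 7) * (μ {ω | (∑ i ∈ Finset.range n, X i ω) < t}).toReal <
            (μ {ω | (∑ i ∈ Finset.range n, X i ω) < t - c}).toReal :=
  gap_relative_general μ X hXmeas hind hid c t₀ δ₀ ht₀ hδ₀ hδ₀pos
end

section
/- Let X_1, X_2, … and Y_1, Y_2, … be mutually independent random variables, all with the common distribution P(X = 2^{k²}) = 2^{−k} for k = 1, 2, 3, …, and let S_j = ∑_{k=1}^j X_k and T_{j'} = ∑_{k=1}^{j'} Y_k. Then for every j ≥ 1, the expected number of indices j' ≥ 1 with S_j ≤ T_{j'} ≤ S_{j+1} is infinite. -/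
/-!
Fix `n ≥ j + 1` and put `m = ⌊log₂ n⌋ + 2`, so that `2n ≤ 2^m ≤ 4n`. Consider the event that
`X₁ = ⋯ = X_j = 2`, `X_{j+1} = 2^{(m+1)²}` and `Y₁, …, Y_n ∈ [2, 2^{m²}]`. By independence its
probability is `2^{-j} · 2^{-(m+1)}` times the probability of the `Y`-part, which is at least `1/2`
because each `Y_i` leaves `[2, 2^{m²}]` with probability at most `2^{-m}` and `n · 2^{-m} ≤ 1/2`.
On this event `S_j = 2j ≤ 2n ≤ T_n ≤ n · 2^{m²} ≤ 2^{(m+1)²} ≤ S_{j+1}`. So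
`P(S_j ≤ T_n ≤ S_{j+1}) ≥ 2^{-(j+4)} / n`, and the expected number of such `n`, being the sum of
these probabilities, dominates a harmonic series.
-/

open MeasureTheory ProbabilityTheory
open scoped ENNReal

theorem ENNReal.tsum_inv_natCast_add_eq_top (N : ℕ) :
    ∑' n : ℕ, ((n + N : ℕ) : ℝ≥0∞)⁻¹ = ∞ := by
  by_contra h
  have := ENNReal.summable_toReal h
  simp only [ENNReal.toReal_inv, ENNReal.toReal_natCast] at this
  exact Real.not_summable_natCast_inv ((summable_nat_add_iff N).mp this)

theorem ENNReal.tsum_eq_top_of_mul_inv_le {a : ℕ → ℝ≥0∞} {c : ℝ≥0∞} (hc : c ≠ 0) (N : ℕ)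
    (h : ∀ n, N ≤ n → c * (n : ℝ≥0∞)⁻¹ ≤ a n) : ∑' n, a n = ∞ := by
  refine top_le_iff.mp ?_
  calc ∞ = c * ∑' n : ℕ, ((n + N : ℕ) : ℝ≥0∞)⁻¹ := by
        rw [ENNReal.tsum_inv_natCast_add_eq_top, ENNReal.mul_top hc]
    _ = ∑' n : ℕ, c * ((n + N : ℕ) : ℝ≥0∞)⁻¹ := ENNReal.tsum_mul_left.symm
    _ ≤ ∑' n : ℕ, a (n + N) := ENNReal.tsum_le_tsum fun n => h _ (Nat.le_add_left N n)
    _ ≤ ∑' n, a n := ENNReal.tsum_comp_le_tsum_of_injective (add_left_injective N) a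

theorem ENNReal.one_le_prod_add_card_mul {ι : Type*} (s : Finset ι) {a : ι → ℝ≥0∞} {x : ℝ≥0∞}
    (ha : ∀ i ∈ s, a i ≤ 1) (hax : ∀ i ∈ s, 1 ≤ a i + x) :
    1 ≤ ∏ i ∈ s, a i + s.card * x := by
  induction s using Finset.cons_induction with
  | empty => simp
  | cons i s hi ih =>
    rw [Finset.forall_mem_cons] at ha hax
    have hprod : ∏ k ∈ s, a k ≤ a i * ∏ k ∈ s, a k + x :=
      calc ∏ k ∈ s, a k ≤ (a i + x) * ∏ k ∈ s, a k := le_mul_of_one_le_left' hax.1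
        _ ≤ a i * ∏ k ∈ s, a k + x := by
          rw [add_mul]
          gcongr
          exact mul_le_of_le_one_right' (Finset.prod_le_one' ha.2)
    calc 1 ≤ ∏ k ∈ s, a k + s.card * x := ih ha.2 hax.2
      _ ≤ a i * ∏ k ∈ s, a k + x + s.card * x := by gcongr
      _ = ∏ k ∈ Finset.cons i s hi, a k + (Finset.cons i s hi).card * x := by
        rw [Finset.prod_cons, Finset.card_cons]
        push_cast
        ring

theorem ENNReal.sum_Icc_half_pow_add_half_pow_eq_one (n : ℕ) :
    ∑ k ∈ Finset.Icc 1 n, (1 / 2 : ℝ≥0∞) ^ k + (1 / 2) ^ n = 1 := by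
  induction n with
  | zero => simp
  | succ n ih =>
    rw [Finset.sum_Icc_succ_top (by omega), add_assoc, ← two_mul, pow_succ', ← mul_assoc,
      one_div, ENNReal.mul_inv_cancel two_ne_zero ENNReal.ofNat_ne_top, one_mul, ← one_div, ih]

theorem two_pow_sq_injective : Function.Injective fun k : ℕ => (2 : ℝ) ^ (k ^ 2) :=
  (pow_right_injective₀ two_pos (by norm_num)).comp (Nat.pow_left_injective two_ne_zero)

theorem one_le_measure_preimage_Icc_add_half_pow {Ω : Type*} [MeasurableSpace Ω] {μ : Measure Ω}
    {Z : Ω → ℝ} (hZ : Measurable Z)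
    (hlaw : ∀ k : ℕ, 1 ≤ k → μ {ω | Z ω = (2 : ℝ) ^ (k ^ 2)} = (1 / 2 : ℝ≥0∞) ^ k) (m : ℕ) :
    1 ≤ μ (Z ⁻¹' Set.Icc 2 (2 ^ (m ^ 2))) + (1 / 2) ^ m := by
  classical
  set atoms := (Finset.Icc 1 m).image fun k : ℕ => (2 : ℝ) ^ (k ^ 2)
  have hatoms : (atoms : Set ℝ) ⊆ Set.Icc 2 (2 ^ (m ^ 2)) := by
    intro y hy
    obtain ⟨k, hk, rfl⟩ := Finset.mem_image.mp hy
    rw [Finset.mem_Icc] at hk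
    exact ⟨le_self_pow₀ one_le_two (pow_ne_zero 2 (by omega)),
      pow_le_pow_right₀ one_le_two (Nat.pow_le_pow_left hk.2 2)⟩
  calc 1 = ∑ k ∈ Finset.Icc 1 m, (1 / 2 : ℝ≥0∞) ^ k + (1 / 2) ^ m :=
        (ENNReal.sum_Icc_half_pow_add_half_pow_eq_one m).symm
    _ = ∑ y ∈ atoms, μ (Z ⁻¹' {y}) + (1 / 2) ^ m := by
        rw [Finset.sum_image fun _ _ _ _ h => two_pow_sq_injective h]
        congr 1
        exact Finset.sum_congr rfl fun k hk => (hlaw k (Finset.mem_Icc.mp hk).1).symm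
    _ = μ (Z ⁻¹' atoms) + (1 / 2) ^ m := by
        rw [sum_measure_preimage_singleton _ fun y _ => hZ (measurableSet_singleton y)]
    _ ≤ μ (Z ⁻¹' Set.Icc 2 (2 ^ (m ^ 2))) + (1 / 2) ^ m := by
        gcongr

theorem lintegral_encard_setOf_mem_eq_tsum {Ω : Type*} [MeasurableSpace Ω] (μ : Measure Ω)
    {A : ℕ → Set Ω} (hA : ∀ n, MeasurableSet (A n)) :
    ∫⁻ ω, {n | ω ∈ A n}.encard.toENNReal ∂μ = ∑' n, μ (A n) := by
  have hcount (ω : Ω) : ({n | ω ∈ A n}.encard : ℝ≥0∞) = ∑' n, (A n).indicator 1 ω := by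
    rw [← ENNReal.tsum_set_one, tsum_subtype {n | ω ∈ A n} fun _ => 1]
    rfl
  simp_rw [hcount, ← lintegral_indicator_one (hA _)]
  exact lintegral_tsum fun n => (measurable_one.indicator (hA n)).aemeasurable

theorem ProbabilityTheory.iIndepFun.measure_biInter_preimage_inter_eq_mul {Ω α γ β : Type*}
    [MeasurableSpace Ω] [MeasurableSpace β] {μ : Measure Ω} {f : α → Ω → β} {g : γ → Ω → β}
    (h : iIndepFun (Sum.elim f g) μ) (s : Finset α) (t : Finset γ) {A : α → Set β}
    {B : γ → Set β} (hA : ∀ i ∈ s, MeasurableSet (A i)) (hB : ∀ i ∈ t, MeasurableSet (B i)) :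
    μ ((⋂ i ∈ s, f i ⁻¹' A i) ∩ ⋂ i ∈ t, g i ⁻¹' B i) =
      (∏ i ∈ s, μ (f i ⁻¹' A i)) * ∏ i ∈ t, μ (g i ⁻¹' B i) := by
  have hAB : ∀ p ∈ s.disjSum t, MeasurableSet (Sum.elim A B p) := by
    rintro (i | i) hi
    exacts [hA i (Finset.inl_mem_disjSum.mp hi), hB i (Finset.inr_mem_disjSum.mp hi)]
  have := h.measure_inter_preimage_eq_mul (s.disjSum t) hAB
  simp only [Finset.prod_disjSum, Sum.elim_inl, Sum.elim_inr] at this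
  rw [← this]
  congr 1
  ext ω
  simp

theorem sum_Icc_le_sum_Icc_le_sum_Icc_succ {x y : ℕ → ℝ} {j n : ℕ} {a b : ℝ} (ha : 0 ≤ a)
    (hjn : j ≤ n) (hx : ∀ i ∈ Finset.Icc 1 j, x i = a)
    (hy : ∀ i ∈ Finset.Icc 1 n, y i ∈ Set.Icc a b)
    (hxy : n * b ≤ x (j + 1)) :
    ∑ i ∈ Finset.Icc 1 j, x i ≤ ∑ i ∈ Finset.Icc 1 n, y i ∧
      ∑ i ∈ Finset.Icc 1 n, y i ≤ ∑ i ∈ Finset.Icc 1 (j + 1), x i := by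
  have hsumx : ∑ i ∈ Finset.Icc 1 j, x i = j * a := by
    rw [Finset.sum_congr rfl hx, Finset.sum_const, Nat.card_Icc, nsmul_eq_mul, Nat.add_sub_cancel]
  have hlow : n * a ≤ ∑ i ∈ Finset.Icc 1 n, y i := by
    simpa using Finset.card_nsmul_le_sum _ _ a fun i hi => (hy i hi).1
  have hup : ∑ i ∈ Finset.Icc 1 n, y i ≤ n * b := by
    simpa using Finset.sum_le_card_nsmul _ _ b fun i hi => (hy i hi).2
  refine ⟨?_, ?_⟩
  · rw [hsumx]
    exact le_trans (by gcongr) hlow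
  · rw [Finset.sum_Icc_succ_top (by omega), hsumx]
    nlinarith

theorem natCast_mul_two_pow_sq_le {n m : ℕ} (h : 2 * n ≤ 2 ^ m) :
    (n : ℝ) * 2 ^ (m ^ 2) ≤ 2 ^ ((m + 1) ^ 2) := by
  have : n * 2 ^ (m ^ 2) ≤ 2 ^ ((m + 1) ^ 2) :=
    calc n * 2 ^ (m ^ 2) ≤ 2 ^ m * 2 ^ (m ^ 2) := by gcongr; omega
      _ ≤ 2 ^ ((m + 1) ^ 2) := by rw [← pow_add]; exact Nat.pow_le_pow_right two_pos (by nlinarith)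
  exact_mod_cast this

theorem ENNReal.natCast_mul_half_pow_le {n m : ℕ} (h : 2 * n ≤ 2 ^ m) :
    (n : ℝ≥0∞) * (1 / 2) ^ m ≤ 1 / 2 := by
  have htwo : (1 / 2 : ℝ≥0∞) * 2 = 1 := ENNReal.div_mul_cancel two_ne_zero ENNReal.ofNat_ne_top
  calc (n : ℝ≥0∞) * (1 / 2) ^ m = 1 / 2 * (((2 * n : ℕ) : ℝ≥0∞) * (1 / 2) ^ m) := by
        push_cast
        rw [← mul_assoc, ← mul_assoc, htwo, one_mul]
    _ ≤ 1 / 2 * ((2 ^ m : ℕ) * (1 / 2) ^ m) := by gcongr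
    _ = 1 / 2 := by rw [Nat.cast_pow, Nat.cast_ofNat, ← mul_pow, mul_comm 2, htwo, one_pow, mul_one]

section Interleaving

variable {Ω : Type*} [MeasurableSpace Ω] {μ : Measure Ω} [IsProbabilityMeasure μ]

theorem half_le_prod_measure_preimage_Icc {Y : ℕ → Ω → ℝ} (hYmeas : ∀ i, Measurable (Y i))
    (hYdist : ∀ i, 1 ≤ i → ∀ k : ℕ, 1 ≤ k →
      μ {ω | Y i ω = (2 : ℝ) ^ (k ^ 2)} = (1 / 2 : ℝ≥0∞) ^ k)
    {n m : ℕ} (h : 2 * n ≤ 2 ^ m) :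
    1 / 2 ≤ ∏ i ∈ Finset.range n, μ (Y (i + 1) ⁻¹' Set.Icc 2 (2 ^ (m ^ 2))) := by
  have hprod := ENNReal.one_le_prod_add_card_mul (Finset.range n) (fun _ _ => prob_le_one)
    fun i _ => one_le_measure_preimage_Icc_add_half_pow (hYmeas (i + 1))
      (hYdist (i + 1) (Nat.le_add_left 1 i)) m
  rw [Finset.card_range] at hprod
  calc 1 / 2 = 1 - 1 / 2 := by rw [one_div, ENNReal.one_sub_inv_two]
    _ ≤ _ := tsub_le_iff_right.mpr
      (hprod.trans (by gcongr; exact ENNReal.natCast_mul_half_pow_le h))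

theorem half_pow_le_measure_sum_Icc_le_sum_Icc_le_sum_Icc_succ {X Y : ℕ → Ω → ℝ}
    (hYmeas : ∀ i, Measurable (Y i))
    (hind : iIndepFun
      (Sum.elim (fun i ω => X (i + 1) ω) (fun i ω => Y (i + 1) ω)) μ)
    (hXdist : ∀ i, 1 ≤ i → ∀ k : ℕ, 1 ≤ k →
      μ {ω | X i ω = (2 : ℝ) ^ (k ^ 2)} = (1 / 2 : ℝ≥0∞) ^ k)
    (hYdist : ∀ i, 1 ≤ i → ∀ k : ℕ, 1 ≤ k →
      μ {ω | Y i ω = (2 : ℝ) ^ (k ^ 2)} = (1 / 2 : ℝ≥0∞) ^ k)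
    {j n m : ℕ} (hjn : j ≤ n) (hm : 2 * n ≤ 2 ^ m) :
    (1 / 2 : ℝ≥0∞) ^ (j + m + 2) ≤ μ {ω |
      (∑ k ∈ Finset.Icc 1 j, X k ω) ≤ (∑ k ∈ Finset.Icc 1 n, Y k ω) ∧
      (∑ k ∈ Finset.Icc 1 n, Y k ω) ≤ (∑ k ∈ Finset.Icc 1 (j + 1), X k ω)} := by
  obtain ⟨e, he_lt, he_j⟩ : ∃ e : ℕ → ℕ, (∀ i < j, e i = 1) ∧ e j = m + 1 :=
    ⟨Function.update (fun _ => 1) j (m + 1), fun i hi => Function.update_of_ne hi.ne _ _,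
      Function.update_self _ _ _⟩
  have hXlaw (i k : ℕ) (hk : 1 ≤ k) :
      μ ((fun ω => X (i + 1) ω) ⁻¹' {2 ^ (k ^ 2)}) = (1 / 2) ^ k :=
    hXdist (i + 1) (Nat.le_add_left 1 i) k hk
  set E := (⋂ i ∈ Finset.range (j + 1), (fun ω => X (i + 1) ω) ⁻¹' {2 ^ (e i ^ 2)}) ∩
    ⋂ i ∈ Finset.range n, (fun ω => Y (i + 1) ω) ⁻¹' Set.Icc 2 (2 ^ (m ^ 2))
  have hE : μ E = (1 / 2) ^ (j + m + 1) *
      ∏ i ∈ Finset.range n, μ (Y (i + 1) ⁻¹' Set.Icc 2 (2 ^ (m ^ 2))) := by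
    rw [hind.measure_biInter_preimage_inter_eq_mul _ _ (fun _ _ => measurableSet_singleton _)
      fun _ _ => measurableSet_Icc]
    congr 1
    rw [Finset.prod_range_succ, Finset.prod_congr rfl fun i hi => by
      rw [he_lt i (Finset.mem_range.mp hi), hXlaw i 1 le_rfl], he_j, hXlaw j _ (by omega),
      Finset.prod_const, Finset.card_range, pow_one, ← pow_add, add_assoc]
  have hsub : E ⊆ {ω |
      (∑ k ∈ Finset.Icc 1 j, X k ω) ≤ (∑ k ∈ Finset.Icc 1 n, Y k ω) ∧
      (∑ k ∈ Finset.Icc 1 n, Y k ω) ≤ (∑ k ∈ Finset.Icc 1 (j + 1), X k ω)} := by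
    intro ω hω
    simp only [E, Set.mem_inter_iff, Set.mem_iInter, Set.mem_preimage, Finset.mem_range,
      Set.mem_singleton_iff] at hω
    obtain ⟨hX, hY⟩ := hω
    have hshift {p : ℕ → Prop} {N : ℕ} (hp : ∀ i < N, p (i + 1)) : ∀ i ∈ Finset.Icc 1 N, p i := by
      intro i hi
      obtain ⟨k, rfl⟩ := Nat.exists_eq_add_of_le' (Finset.mem_Icc.mp hi).1
      exact hp k (Nat.succ_le_iff.mp (Finset.mem_Icc.mp hi).2)
    refine sum_Icc_le_sum_Icc_le_sum_Icc_succ zero_le_two hjn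
      (hshift fun i hi => by rw [hX i (by omega), he_lt i hi]; norm_num) (hshift hY) ?_
    rw [hX j (by omega), he_j]
    exact natCast_mul_two_pow_sq_le hm
  calc (1 / 2 : ℝ≥0∞) ^ (j + m + 2) = (1 / 2) ^ (j + m + 1) * (1 / 2) := pow_succ _ _
    _ ≤ (1 / 2) ^ (j + m + 1) *
          ∏ i ∈ Finset.range n, μ (Y (i + 1) ⁻¹' Set.Icc 2 (2 ^ (m ^ 2))) := by
        gcongr
        exact half_le_prod_measure_preimage_Icc hYmeas hYdist hm
    _ = μ E := hE.symm
    _ ≤ _ := measure_mono hsub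

theorem half_pow_mul_inv_le_measure_sum_Icc_le_sum_Icc_le_sum_Icc_succ {X Y : ℕ → Ω → ℝ}
    (hYmeas : ∀ i, Measurable (Y i))
    (hind : iIndepFun
      (Sum.elim (fun i ω => X (i + 1) ω) (fun i ω => Y (i + 1) ω)) μ)
    (hXdist : ∀ i, 1 ≤ i → ∀ k : ℕ, 1 ≤ k →
      μ {ω | X i ω = (2 : ℝ) ^ (k ^ 2)} = (1 / 2 : ℝ≥0∞) ^ k)
    (hYdist : ∀ i, 1 ≤ i → ∀ k : ℕ, 1 ≤ k →
      μ {ω | Y i ω = (2 : ℝ) ^ (k ^ 2)} = (1 / 2 : ℝ≥0∞) ^ k)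
    {j n : ℕ} (hjn : j ≤ n) (hn : 1 ≤ n) :
    (1 / 2 : ℝ≥0∞) ^ (j + 4) * (n : ℝ≥0∞)⁻¹ ≤ μ {ω |
      (∑ k ∈ Finset.Icc 1 j, X k ω) ≤ (∑ k ∈ Finset.Icc 1 n, Y k ω) ∧
      (∑ k ∈ Finset.Icc 1 n, Y k ω) ≤ (∑ k ∈ Finset.Icc 1 (j + 1), X k ω)} := by
  set L := Nat.log 2 n
  have hlog_le : 2 ^ L ≤ n := Nat.pow_log_le_self 2 (by omega)
  have hlt_log : n < 2 ^ (L + 1) := Nat.lt_pow_succ_log_self one_lt_two n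
  calc (1 / 2 : ℝ≥0∞) ^ (j + 4) * (n : ℝ≥0∞)⁻¹ ≤ (1 / 2) ^ (j + 4) * (1 / 2) ^ L := by
        gcongr
        rw [one_div, ← ENNReal.inv_pow]
        exact ENNReal.inv_le_inv.mpr (by exact_mod_cast hlog_le)
    _ = (1 / 2) ^ (j + (L + 2) + 2) := by rw [← pow_add]; ring_nf
    _ ≤ _ := half_pow_le_measure_sum_Icc_le_sum_Icc_le_sum_Icc_succ hYmeas hind hXdist hYdist hjn
        (by rw [pow_succ]; omega)

end Interleaving

theorem unfairness_general {Ω : Type*} [MeasurableSpace Ω]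
    (μ : Measure Ω) [IsProbabilityMeasure μ] (X Y : ℕ → Ω → ℝ)
    (hXmeas : ∀ i, Measurable (X i)) (hYmeas : ∀ i, Measurable (Y i))
    (hind : iIndepFun
      (Sum.elim (fun i ω => X (i + 1) ω) (fun i ω => Y (i + 1) ω)) μ)
    (hXdist : ∀ i, 1 ≤ i → ∀ k : ℕ, 1 ≤ k →
      μ {ω | X i ω = (2 : ℝ) ^ (k ^ 2)} = (1 / 2 : ℝ≥0∞) ^ k)
    (hYdist : ∀ i, 1 ≤ i → ∀ k : ℕ, 1 ≤ k →
      μ {ω | Y i ω = (2 : ℝ) ^ (k ^ 2)} = (1 / 2 : ℝ≥0∞) ^ k)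
    (j : ℕ) :
    ∫⁻ ω, ({j' : ℕ | 1 ≤ j' ∧
        (∑ k ∈ Finset.Icc 1 j, X k ω) ≤ (∑ k ∈ Finset.Icc 1 j', Y k ω) ∧
        (∑ k ∈ Finset.Icc 1 j', Y k ω) ≤ (∑ k ∈ Finset.Icc 1 (j + 1), X k ω)} :
        Set ℕ).encard.toENNReal ∂μ = ⊤ := by
  set A : ℕ → Set Ω := fun n => {ω | 1 ≤ n ∧
      (∑ k ∈ Finset.Icc 1 j, X k ω) ≤ (∑ k ∈ Finset.Icc 1 n, Y k ω) ∧
      (∑ k ∈ Finset.Icc 1 n, Y k ω) ≤ (∑ k ∈ Finset.Icc 1 (j + 1), X k ω)}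
  have hX (N : ℕ) := Finset.measurable_sum (Finset.Icc 1 N) fun i _ => hXmeas i
  have hY (N : ℕ) := Finset.measurable_sum (Finset.Icc 1 N) fun i _ => hYmeas i
  have hA (n : ℕ) : MeasurableSet (A n) :=
    (MeasurableSet.const _).inter ((measurableSet_le (hX j) (hY n)).inter
      (measurableSet_le (hY n) (hX (j + 1))))
  refine (lintegral_encard_setOf_mem_eq_tsum μ hA).trans
    (ENNReal.tsum_eq_top_of_mul_inv_le (c := (1 / 2) ^ (j + 4)) (by simp) (j + 1) fun n hn => ?_)
  simpa [A, show 1 ≤ n by omega] using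
    half_pow_mul_inv_le_measure_sum_Icc_le_sum_Icc_le_sum_Icc_succ hYmeas hind hXdist hYdist
      (by omega) (by omega)

/-- unfairness of noisy scheduling.  Let `X 1, X 2, …` and
`Y 1, Y 2, …` be mutually independent random variables, all with the common distribution
`P(X = 2^(k²)) = 2⁻ᵏ` for `k = 1, 2, …`, and let `S j = ∑_{k=1}^j X k` and
`T j' = ∑_{k=1}^{j'} Y k`.  Then for every `j ≥ 1` the expected number of indices
`j' ≥ 1` with `S j ≤ T j' ≤ S (j+1)` is infinite. -/
theorem unfairness {Ω : Type*} [MeasurableSpace Ω]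
    (μ : Measure Ω) [IsProbabilityMeasure μ] (X Y : ℕ → Ω → ℝ)
    (hXmeas : ∀ i, Measurable (X i)) (hYmeas : ∀ i, Measurable (Y i))
    (hind : iIndepFun
      (Sum.elim (fun i ω => X (i + 1) ω) (fun i ω => Y (i + 1) ω)) μ)
    (hXdist : ∀ i, 1 ≤ i → ∀ k : ℕ, 1 ≤ k →
      μ {ω | X i ω = (2 : ℝ) ^ (k ^ 2)} = (1 / 2 : ℝ≥0∞) ^ k)
    (hYdist : ∀ i, 1 ≤ i → ∀ k : ℕ, 1 ≤ k →
      μ {ω | Y i ω = (2 : ℝ) ^ (k ^ 2)} = (1 / 2 : ℝ≥0∞) ^ k)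
    (j : ℕ) (hj : 1 ≤ j) :
    ∫⁻ ω, ({j' : ℕ | 1 ≤ j' ∧
        (∑ k ∈ Finset.Icc 1 j, X k ω) ≤ (∑ k ∈ Finset.Icc 1 j', Y k ω) ∧
        (∑ k ∈ Finset.Icc 1 j', Y k ω) ≤ (∑ k ∈ Finset.Icc 1 (j + 1), X k ω)} :
        Set ℕ).encard.toENNReal ∂μ = ⊤ :=
  unfairness_general μ X Y hXmeas hYmeas hind hXdist hYdist j
end

section
/- In every execution of the lean-consensus algorithm, no process writes 1 to a_b[r] unless either (a) r = 1 and b is the input value of some participating process, or (b) r > 1 and some process has already written 1 to a_b[r−1] before that write. -/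
/-- Local state of a process executing the lean-consensus algorithm.  `pc ∈ {0,1,2,3}`
is the index of the next operation within the current round: `0` = read `a_0[r]`,
`1` = read `a_1[r]`, `2` = write `1` to `a_p[r]`, `3` = read `a_{1-p}[r-1]` (deciding `p`
if it is `0`).  `pref` is the current preference, `round` the current round number,
`firstRead` the value read from `a_0[r]` at `pc = 0`, and `decided` records the decision
value once the process has decided (after which it takes no further steps). -/
structure ProcState where
  pc : ℕ
  pref : Bool
  round : ℕ
  firstRead : Bool
  decided : Option Bool
  deriving DecidableEq

/-- A global configuration of the lean-consensus algorithm: the contents of the two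
register arrays (`reg b r` is the register `a_b[r]`, where bit `false` stands for `0` and
`true` for `1`) together with the local state of each of the `N` processes. -/
structure Config (N : ℕ) where
  reg : Bool → ℕ → Bool
  proc : Fin N → ProcState

/-- The initial configuration: `a_0[0] = a_1[0] = 1`, all other registers `0`, and every
process at the first operation of round `1`, preferring its input bit. -/
def initConfig (N : ℕ) (input : Fin N → Bool) : Config N where
  reg := fun _ r => r == 0
  proc := fun i => ⟨0, input i, 1, false, none⟩

/-- One atomic operation of a single process of the lean-consensus algorithm: given the
current register contents and the process's local state, return its new local state
together with `some (b, r)` if the operation writes `1` to register `a_b[r]` (and `none`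
for a read).  A decided process does nothing. -/
def procStep (reg : Bool → ℕ → Bool) (s : ProcState) : ProcState × Option (Bool × ℕ) :=
  if s.decided ≠ none then (s, none)
  else if s.pc = 0 then ({ s with pc := 1, firstRead := reg false s.round }, none)
  else if s.pc = 1 then
    let v0 := s.firstRead
    let v1 := reg true s.round
    let p := if v0 = true ∧ v1 = false then false
             else if v1 = true ∧ v0 = false then true
             else s.pref
    ({ s with pc := 2, pref := p }, none)
  else if s.pc = 2 then ({ s with pc := 3 }, some (s.pref, s.round))
  else if reg (!s.pref) (s.round - 1) = false then
    ({ s with decided := some s.pref }, none)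
  else ({ s with pc := 0, round := s.round + 1 }, none)

/-- The global transition: process `i` performs its next atomic operation (interleaving
semantics). -/
def step {N : ℕ} (c : Config N) (i : Fin N) : Config N :=
  let r := procStep c.reg (c.proc i)
  { reg := fun b k => match r.2 with
      | some w => if b = w.1 ∧ k = w.2 then true else c.reg b k
      | none => c.reg b k
    proc := Function.update c.proc i r.1 }

/-- `run input sched t` is the configuration reached after the first `t` steps of the
execution of lean-consensus from inputs `input` in which the process `sched s` performs
the `s`-th atomic operation. -/
def run {N : ℕ} (input : Fin N → Bool) (sched : ℕ → Fin N) : ℕ → Config N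
  | 0 => initConfig N input
  | t + 1 => step (run input sched t) (sched t)

/-- The inductive invariant of lean-consensus used to prove Lemma 1. -/
def LCInv {N : ℕ} (input : Fin N → Bool) (c : Config N) : Prop :=
  (∀ b r, c.reg b r = true →
      r = 0 ∨ (r = 1 ∧ ∃ j, input j = b) ∨ (1 < r ∧ c.reg b (r - 1) = true)) ∧
  (∀ i : Fin N, 1 ≤ (c.proc i).round) ∧
  (∀ i : Fin N, (c.proc i).round = 1 → ∃ j, input j = (c.proc i).pref) ∧
  (∀ i : Fin N, 1 < (c.proc i).round →
      c.reg (c.proc i).pref ((c.proc i).round - 1) = true) ∧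
  (∀ i : Fin N, (c.proc i).pc ≠ 0 → (c.proc i).firstRead = true →
      c.reg false (c.proc i).round = true) ∧
  (∀ i : Fin N, (c.proc i).pc ≠ 0 → (c.proc i).pc ≠ 1 → (c.proc i).pc ≠ 2 →
      c.reg (c.proc i).pref (c.proc i).round = true)

lemma inv_init {N : ℕ} (input : Fin N → Bool) : LCInv input (initConfig N input) := by
  refine ⟨?_, ?_, ?_, ?_, ?_, ?_⟩ <;> simp [initConfig]

lemma reg_mono {N : ℕ} (c : Config N) (i : Fin N) (b : Bool) (k : ℕ)
    (h : c.reg b k = true) : (step c i).reg b k = true := by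
  show (match (procStep c.reg (c.proc i)).2 with
      | some w => if b = w.1 ∧ k = w.2 then true else c.reg b k
      | none => c.reg b k) = true
  cases (procStep c.reg (c.proc i)).2 with
  | none => exact h
  | some w => by_cases hw : b = w.1 ∧ k = w.2 <;> simp [hw, h]

lemma inv_step {N : ℕ} (input : Fin N → Bool) (c : Config N) (i : Fin N)
    (h : LCInv input c) : LCInv input (step c i) := by
  obtain ⟨hB, hR, hC1, hC2, hD, hE⟩ := h
  by_cases hdec : (c.proc i).decided ≠ none
  · -- decided process: nothing changes
    have hps : procStep c.reg (c.proc i) = (c.proc i, none) := by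
      simp [procStep, hdec]
    have hreg : (step c i).reg = c.reg := by
      funext b k; show (match (procStep c.reg (c.proc i)).2 with
        | some w => if b = w.1 ∧ k = w.2 then true else c.reg b k
        | none => c.reg b k) = c.reg b k
      rw [hps]
    have hproc : (step c i).proc = c.proc := by
      show Function.update c.proc i (procStep c.reg (c.proc i)).1 = c.proc
      rw [hps]; exact Function.update_eq_self i c.proc
    unfold LCInv
    rw [hreg, hproc]
    exact ⟨hB, hR, hC1, hC2, hD, hE⟩
  · push_neg at hdec
    by_cases h0 : (c.proc i).pc = 0
    · -- first read
      have hps : procStep c.reg (c.proc i) =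
          ({ c.proc i with pc := 1, firstRead := c.reg false (c.proc i).round }, none) := by
        simp [procStep, hdec, h0]
      have hreg : (step c i).reg = c.reg := by
        funext b k; show (match (procStep c.reg (c.proc i)).2 with
          | some w => if b = w.1 ∧ k = w.2 then true else c.reg b k
          | none => c.reg b k) = c.reg b k
        rw [hps]
      have hproc : (step c i).proc = Function.update c.proc i
          { c.proc i with pc := 1, firstRead := c.reg false (c.proc i).round } := by
        show Function.update c.proc i (procStep c.reg (c.proc i)).1 = _
        rw [hps]
      unfold LCInv
      rw [hreg, hproc]
      refine ⟨hB, ?_, ?_, ?_, ?_, ?_⟩ <;> intro i' <;> by_cases hi : i' = i <;>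
        first | (rw [hi, Function.update_self]) | simp only [Function.update_of_ne hi]
      · exact hR i
      · exact hR i'
      · exact hC1 i
      · exact hC1 i'
      · exact hC2 i
      · exact hC2 i'
      · intro _ hf; exact hf
      · exact hD i'
      · intro _ hc _; exact absurd rfl hc
      · exact hE i'
    by_cases h1 : (c.proc i).pc = 1
    · -- second read
      set p := (if (c.proc i).firstRead = true ∧ c.reg true (c.proc i).round = false
            then false
            else if c.reg true (c.proc i).round = true ∧ (c.proc i).firstRead = false
            then true else (c.proc i).pref) with hp
      have hps : procStep c.reg (c.proc i) = ({ c.proc i with pc := 2, pref := p }, none) := by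
        rw [hp]; simp [procStep, hdec, h0, h1]
      have hreg : (step c i).reg = c.reg := by
        funext b k; show (match (procStep c.reg (c.proc i)).2 with
          | some w => if b = w.1 ∧ k = w.2 then true else c.reg b k
          | none => c.reg b k) = c.reg b k
        rw [hps]
      have hproc : (step c i).proc = Function.update c.proc i
          { c.proc i with pc := 2, pref := p } := by
        show Function.update c.proc i (procStep c.reg (c.proc i)).1 = _
        rw [hps]
      -- key fact about the new preference
      have hkey : p = (c.proc i).pref ∨ c.reg p (c.proc i).round = true := by
        rw [hp]
        split_ifs with hA hBB
        · right; exact hD i (by rw [h1]; exact one_ne_zero) hA.1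
        · right; exact hBB.1
        · left; rfl
      unfold LCInv
      rw [hreg, hproc]
      refine ⟨hB, ?_, ?_, ?_, ?_, ?_⟩ <;> intro i' <;> by_cases hi : i' = i <;>
        first | (rw [hi, Function.update_self]) | simp only [Function.update_of_ne hi]
      · exact hR i
      · exact hR i'
      · -- C1 for i
        intro hr1
        replace hr1 : (c.proc i).round = 1 := hr1
        show ∃ j, input j = p
        rcases hkey with hk | hk
        · rw [hk]; exact hC1 i hr1
        · rcases hB p (c.proc i).round hk with h' | h' | h'
          · omega
          · exact h'.2
          · omega
      · exact hC1 i'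
      · -- C2 for i
        intro hr
        replace hr : 1 < (c.proc i).round := hr
        show c.reg p ((c.proc i).round - 1) = true
        rcases hkey with hk | hk
        · rw [hk]; exact hC2 i hr
        · rcases hB p (c.proc i).round hk with h' | h' | h'
          · omega
          · omega
          · exact h'.2
      · exact hC2 i'
      · intro _ hf
        exact hD i (by rw [h1]; exact one_ne_zero) hf
      · exact hD i'
      · intro _ _ hc; exact absurd rfl hc
      · exact hE i'
    by_cases h2 : (c.proc i).pc = 2
    · -- the write
      have hps : procStep c.reg (c.proc i) =
          ({ c.proc i with pc := 3 }, some ((c.proc i).pref, (c.proc i).round)) := by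
        simp [procStep, hdec, h0, h1, h2]
      have hreg : ∀ b k, (step c i).reg b k =
          if b = (c.proc i).pref ∧ k = (c.proc i).round then true else c.reg b k := by
        intro b k; show (match (procStep c.reg (c.proc i)).2 with
          | some w => if b = w.1 ∧ k = w.2 then true else c.reg b k
          | none => c.reg b k) = _
        rw [hps]
      have hproc : (step c i).proc = Function.update c.proc i
          { c.proc i with pc := 3 } := by
        show Function.update c.proc i (procStep c.reg (c.proc i)).1 = _
        rw [hps]
      have hmono : ∀ b k, c.reg b k = true → (step c i).reg b k = true := by
        intro b k hk; rw [hreg]; split_ifs <;> simp [hk]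
      unfold LCInv
      rw [hproc]
      refine ⟨?_, ?_, ?_, ?_, ?_, ?_⟩
      · intro b r hbr
        rw [hreg] at hbr
        split_ifs at hbr with hw
        · obtain ⟨hb, hr⟩ := hw
          subst hb hr
          have hR1 := hR i
          rcases Nat.lt_or_ge 1 (c.proc i).round with hgt | hle
          · exact Or.inr (Or.inr ⟨hgt, hmono _ _ (hC2 i hgt)⟩)
          · have : (c.proc i).round = 1 := le_antisymm hle (hR i)
            exact Or.inr (Or.inl ⟨this, hC1 i this⟩)
        · rcases hB b r hbr with h' | h' | h'
          · exact Or.inl h'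
          · exact Or.inr (Or.inl h')
          · exact Or.inr (Or.inr ⟨h'.1, hmono _ _ h'.2⟩)
      all_goals intro i' <;> by_cases hi : i' = i <;>
        first | (rw [hi, Function.update_self]) | simp only [Function.update_of_ne hi]
      · exact hR i
      · exact hR i'
      · exact hC1 i
      · exact hC1 i'
      · intro hr; exact hmono _ _ (hC2 i hr)
      · intro hr; exact hmono _ _ (hC2 i' hr)
      · intro _ hf; exact hmono _ _ (hD i (by rw [h2]; omega) hf)
      · intro hz hf; exact hmono _ _ (hD i' hz hf)
      · intro _ _ _; rw [hreg]; simp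
      · intro ha hb' hc'; exact hmono _ _ (hE i' ha hb' hc')
    · -- pc = 3 : decide or advance
      by_cases h3 : c.reg (!(c.proc i).pref) ((c.proc i).round - 1) = false
      · have hps : procStep c.reg (c.proc i) =
            ({ c.proc i with decided := some (c.proc i).pref }, none) := by
          simp [procStep, hdec, h0, h1, h2, h3]
        have hreg : (step c i).reg = c.reg := by
          funext b k; show (match (procStep c.reg (c.proc i)).2 with
            | some w => if b = w.1 ∧ k = w.2 then true else c.reg b k
            | none => c.reg b k) = c.reg b k
          rw [hps]
        have hproc : (step c i).proc = Function.update c.proc i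
            { c.proc i with decided := some (c.proc i).pref } := by
          show Function.update c.proc i (procStep c.reg (c.proc i)).1 = _
          rw [hps]
        unfold LCInv
        rw [hreg, hproc]
        refine ⟨hB, ?_, ?_, ?_, ?_, ?_⟩ <;> intro i' <;> by_cases hi : i' = i <;>
          first | (rw [hi, Function.update_self]) | simp only [Function.update_of_ne hi]
        · exact hR i
        · exact hR i'
        · exact hC1 i
        · exact hC1 i'
        · exact hC2 i
        · exact hC2 i'
        · exact hD i
        · exact hD i'
        · exact hE i
        · exact hE i'
      · have hps : procStep c.reg (c.proc i) =
            ({ c.proc i with pc := 0, round := (c.proc i).round + 1 }, none) := by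
          simp [procStep, hdec, h0, h1, h2, h3]
        have hreg : (step c i).reg = c.reg := by
          funext b k; show (match (procStep c.reg (c.proc i)).2 with
            | some w => if b = w.1 ∧ k = w.2 then true else c.reg b k
            | none => c.reg b k) = c.reg b k
          rw [hps]
        have hproc : (step c i).proc = Function.update c.proc i
            { c.proc i with pc := 0, round := (c.proc i).round + 1 } := by
          show Function.update c.proc i (procStep c.reg (c.proc i)).1 = _
          rw [hps]
        unfold LCInv
        rw [hreg, hproc]
        refine ⟨hB, ?_, ?_, ?_, ?_, ?_⟩ <;> intro i' <;> by_cases hi : i' = i <;>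
          first | (rw [hi, Function.update_self]) | simp only [Function.update_of_ne hi]
        · show 1 ≤ (c.proc i).round + 1; omega
        · exact hR i'
        · intro hc'
          exact absurd (show (c.proc i).round + 1 = 1 from hc') (by have := hR i; omega)
        · exact hC1 i'
        · intro _; simpa using hE i h0 h1 h2
        · exact hC2 i'
        · intro hc'; exact absurd rfl hc'
        · exact hD i'
        · intro hc'; exact absurd rfl hc'
        · exact hE i'

lemma inv_run {N : ℕ} (input : Fin N → Bool) (sched : ℕ → Fin N) (t : ℕ) :
    LCInv input (run input sched t) := by
  induction t with
  | zero => exact inv_init input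
  | succ t ih => exact inv_step input _ (sched t) ih

/-- Lemma 1 of the paper.  In every execution of lean-consensus, no
process writes `1` to `a_b[r]` unless either (a) `r = 1` and `b` is the input of some
participating process, or (b) `r > 1` and some process has already written `1` to
`a_b[r-1]` before that write (equivalently, since `a_b[r-1]` is initially `0` for
`r > 1`, the register `a_b[r-1]` already holds `1`). -/
theorem no_write_unless_predecessor {N : ℕ} (input : Fin N → Bool) (sched : ℕ → Fin N)
    (t : ℕ) (i : Fin N) (b : Bool) (r : ℕ)
    (hsched : sched t = i)
    (hundec : ((run input sched t).proc i).decided = none)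
    (hpc : ((run input sched t).proc i).pc = 2)
    (hpref : ((run input sched t).proc i).pref = b)
    (hround : ((run input sched t).proc i).round = r) :
    (r = 1 ∧ ∃ j : Fin N, input j = b) ∨
    (1 < r ∧ (run input sched t).reg b (r - 1) = true) := by
  obtain ⟨hB, hR, hC1, hC2, hD, hE⟩ := inv_run input sched t
  subst hpref hround
  rcases Nat.lt_or_ge 1 ((run input sched t).proc i).round with hgt | hle
  · exact Or.inr ⟨hgt, hC2 i hgt⟩
  · have h1 : ((run input sched t).proc i).round = 1 := le_antisymm hle (hR i)
    exact Or.inl ⟨h1, hC1 i h1⟩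
end

section
/- If every participating process starts the lean-consensus algorithm with the same input bit b, then in every execution every process decides b after executing at most 8 operations (i.e., by the end of its second round). -/
/-!
If every input is `b`, nobody ever writes `1` to `a_{1-b}[r]` for `r ≥ 1`: a process only
switches to `1-b` after reading `1` there. Hence every process keeps preference `b`, passes
its round-1 check (since `a_{1-b}[0] = 1`) and decides `b` at its round-2 check, which reads
`a_{1-b}[1] = 0`.
-/

def opCount {N : ℕ} (sched : ℕ → Fin N) (i : Fin N) (t : ℕ) : ℕ :=
  ((Finset.range t).filter fun s => sched s = i).card

lemma opCount_succ {N : ℕ} (sched : ℕ → Fin N) (i : Fin N) (t : ℕ) :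
    opCount sched i (t + 1) = opCount sched i t + if sched t = i then 1 else 0 := by
  unfold opCount
  rw [Finset.range_add_one, Finset.filter_insert]
  split_ifs
  · rw [Finset.card_insert_of_notMem (by simp)]
  · rfl

lemma step_reg {N : ℕ} (c : Config N) (j : Fin N) (x : Bool) (r : ℕ) :
    (step c j).reg x r = (c.reg x r || decide ((procStep c.reg (c.proc j)).2 = some (x, r))) := by
  unfold step
  generalize procStep c.reg (c.proc j) = p
  rcases p with ⟨_, _ | ⟨y, k⟩⟩ <;> simp [Bool.or_comm, eq_comm]

lemma step_proc {N : ℕ} (c : Config N) (j i : Fin N) :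
    (step c j).proc i = if i = j then (procStep c.reg (c.proc j)).1 else c.proc i :=
  Function.update_apply ..

structure RegInv (b : Bool) (reg : Bool → ℕ → Bool) : Prop where
  rival_empty : ∀ r, 1 ≤ r → reg (!b) r = false
  initial : ∀ x, reg x 0 = true

def ProcInv (b : Bool) (k : ℕ) (s : ProcState) : Prop :=
  if 8 ≤ k then s.decided = some b
  else s.decided = none ∧ s.pref = b ∧ s.pc = k % 4 ∧ s.round = k / 4 + 1 ∧
    (s.pc = 1 → b = true → s.firstRead = false) -- `firstRead` is then `a_{1-b}[round]`

lemma ProcInv.decided_eq {b : Bool} {k : ℕ} {s : ProcState} (hs : ProcInv b k s) (hk : 8 ≤ k) :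
    s.decided = some b := by
  rwa [ProcInv, if_pos hk] at hs

lemma procStep_inv {b : Bool} {reg : Bool → ℕ → Bool} {k : ℕ} {s : ProcState}
    (hreg : RegInv b reg) (hs : ProcInv b k s) :
    ProcInv b (k + 1) (procStep reg s).1 ∧ ∀ w ∈ (procStep reg s).2, w.1 = b ∧ 1 ≤ w.2 := by
  unfold ProcInv at hs
  split_ifs at hs with hk
  · simp [procStep, hs, ProcInv]; omega
  obtain ⟨hdec, hpref, hpc, hround, hfr⟩ := hs
  have rival₁ : reg (!b) 1 = false := hreg.rival_empty 1 le_rfl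
  have rival₂ : reg (!b) 2 = false := hreg.rival_empty 2 (by norm_num)
  have rival₀ : reg (!b) 0 = true := hreg.initial _
  cases b <;> interval_cases k <;> simp_all [procStep, ProcInv]

lemma RegInv.step {N : ℕ} {b : Bool} {c : Config N} {j : Fin N} (hreg : RegInv b c.reg)
    (hw : ∀ w ∈ (procStep c.reg (c.proc j)).2, w.1 = b ∧ 1 ≤ w.2) :
    RegInv b (step c j).reg where
  rival_empty r hr := by
    rw [step_reg, hreg.rival_empty r hr, Bool.false_or, decide_eq_false_iff_not]
    intro h
    exact Bool.not_ne_self b (hw _ h).1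
  initial x := by rw [step_reg, hreg.initial, Bool.true_or]

lemma run_inv {N : ℕ} {b : Bool} {input : Fin N → Bool} (hinput : ∀ i, input i = b)
    (sched : ℕ → Fin N) (t : ℕ) :
    RegInv b (run input sched t).reg ∧
      ∀ i, ProcInv b (opCount sched i t) ((run input sched t).proc i) := by
  induction t with
  | zero =>
    refine ⟨⟨fun r hr => ?_, fun _ => rfl⟩, fun i => ?_⟩
    · simp [run, initConfig]; omega
    · simp [run, initConfig, opCount, ProcInv, hinput i]
  | succ t ih =>
    obtain ⟨hreg, hproc⟩ := ih
    obtain ⟨hnext, hw⟩ := procStep_inv hreg (hproc (sched t))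
    refine ⟨hreg.step hw, fun i => ?_⟩
    rw [run, step_proc, opCount_succ]
    by_cases h : i = sched t
    · subst h; simpa using hnext
    · simpa [h, Ne.symm h] using hproc i

/-- validity, Lemma 2 of the paper.  If every process starts
lean-consensus with the same input bit `b`, then in every execution every process that
has executed at least `8` operations (i.e. has completed its second round) has decided
`b`. -/
theorem validity {N : ℕ} (b : Bool) (input : Fin N → Bool) (hinput : ∀ i, input i = b)
    (sched : ℕ → Fin N) (i : Fin N) (t : ℕ)
    (h8 : 8 ≤ ((Finset.range t).filter fun s => sched s = i).card) :
    ((run input sched t).proc i).decided = some b :=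
  ((run_inv hinput sched t).2 i).decided_eq h8
end
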